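/- arXiv:math/0608054 — 8 statements merged into one kernel-verified Lean document; each statement's English description precedes it below -/
import Mathlib

section
/- If a probability distribution P on {1,...,m} factors according to a nonnegative integer d×m matrix A (i.e., P is in the image of the monomial map φ_A(t_1,...,t_d) = (∏_i t_i^{a_{i1}}, ..., ∏_i t_i^{a_{im}}) on nonnegative reals), then the support F of P is A-feasible: for every j ∉ F, the support of the j-th column a_j of A is not contained in the union of the supports of the columns a_l with l ∈ F. -/
/-- If a probability distribution `P` on `{1,...,m}` factors according to a
nonnegative integer `d × m` matrix `A` (i.e. `P` is in the image of the monomial map `φ_A`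
on nonnegative reals), then the support of `P` is `A`-feasible. -/
theorem support_of_factoring_is_feasible {d m : ℕ} (A : Matrix (Fin d) (Fin m) ℕ)
    (P : Fin m → ℝ) (hP : ∀ j, 0 ≤ P j) (hsum : ∑ j, P j = 1)
    (t : Fin d → ℝ) (ht : ∀ i, 0 ≤ t i)
    (hfact : ∀ j, P j = ∏ i, t i ^ A i j) :
    ∀ j : Fin m, P j = 0 →
      ¬ ({i : Fin d | A i j ≠ 0} ⊆ ⋃ l ∈ {l : Fin m | P l ≠ 0}, {i : Fin d | A i l ≠ 0}) := by
  intro j hPj hsub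
  -- Since P j = 0, some factor vanishes
  have h0 : ∏ i, t i ^ A i j = 0 := (hfact j ▸ hPj)
  obtain ⟨i, -, hi⟩ := Finset.prod_eq_zero_iff.mp h0
  have hAij : A i j ≠ 0 := by rintro h; rw [h, pow_zero] at hi; norm_num at hi
  have hti : t i = 0 := (pow_eq_zero_iff hAij).mp hi
  have := hsub hAij
  simp only [Set.mem_iUnion, Set.mem_setOf_eq] at this
  obtain ⟨l, hPl, hAil⟩ := this
  apply hPl
  rw [hfact l]
  exact Finset.prod_eq_zero (Finset.mem_univ i) (by rw [hti]; exact zero_pow hAil)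
end

section
/- A probability distribution P factors according to A if and only if P lies in the nonnegative toric variety X_A and the support of P is A-feasible. -/
/-!
If `P = φ_A(t)`, then `∏ P_j ^ u_j = ∏ t_i ^ (A u)_i`, so `P` satisfies every binomial relation
of `X_A`; and a zero coordinate `P_j` forces some `t_i = 0` with `a_ij ≠ 0`, which kills every
column meeting row `i`: this is feasibility of the support.

Conversely, on the support `F` of `P` the binomial relations say that `log P` is orthogonal to
every integer vector supported on `F` in the kernel of `A`. As `A` has integer entries, its real
kernel is spanned by such vectors (Gaussian elimination with integer pivots), so
`log P_j = ∑ c_i a_ij` on `F` for some real `c`. Put `t_i = exp c_i` on the rows meeting `F` and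
`t_i = 0` elsewhere; feasibility provides, for each zero `P_j`, a row with `a_ij ≠ 0` among the
latter.
-/

open Finset Matrix

theorem prod_prod_pow_pow_eq_prod_pow_sum {ι κ M : Type*} [Fintype ι] [Fintype κ] [CommMonoid M]
    (A : Matrix κ ι ℕ) (t : κ → M) (q : ι → ℕ) :
    ∏ j, (∏ i, t i ^ A i j) ^ q j = ∏ i, t i ^ ∑ j, A i j * q j := by
  calc ∏ j, (∏ i, t i ^ A i j) ^ q j = ∏ j, ∏ i, t i ^ (A i j * q j) := by
        simp_rw [← prod_pow, pow_mul]
    _ = ∏ i, ∏ j, t i ^ (A i j * q j) := prod_comm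
    _ = ∏ i, t i ^ ∑ j, A i j * q j := by simp_rw [prod_pow_eq_pow_sum]

theorem not_subset_biUnion_of_eq_prod_pow {ι κ M : Type*} [Fintype κ] [CommMonoidWithZero M]
    [NoZeroDivisors M] [Nontrivial M] (A : Matrix κ ι ℕ) (t : κ → M) (P : ι → M)
    (hPt : ∀ j, P j = ∏ i, t i ^ A i j) (j : ι) (hj : P j = 0) :
    ¬ {i | A i j ≠ 0} ⊆ ⋃ l ∈ {l | P l ≠ 0}, {i | A i l ≠ 0} := by
  obtain ⟨i, -, hi⟩ := prod_eq_zero_iff.1 (hPt j ▸ hj)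
  obtain ⟨hti, hAij⟩ := pow_eq_zero_iff'.1 hi
  intro hsub
  obtain ⟨l, hPl, hAil⟩ : ∃ l, P l ≠ 0 ∧ A i l ≠ 0 := by simpa using hsub hAij
  exact hPl (hPt l ▸ prod_eq_zero (mem_univ i) (by simp [hti, hAil]))

def intKernelOn {ι : Type*} [Fintype ι] (S : Set ι) (V : Set (ι → ℤ)) : Set (ι → ℤ) :=
  {w | (∀ j ∉ S, w j = 0) ∧ ∀ v ∈ V, v ⬝ᵥ w = 0}

section IntKernel

variable {ι K : Type*} [Fintype ι] [Field K] [CharZero K]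

theorem dotProduct_sub_smul_eq_zero_of_orthogonal_intKernelOn {S : Set ι} {V : Set (ι → ℤ)}
    {a w₀ : ι → ℤ} {y : ι → K} (hy : ∀ w ∈ intKernelOn S (insert a V), (Int.cast ∘ w) ⬝ᵥ y = 0)
    (hw₀ : w₀ ∈ intKernelOn S V) (hα : a ⬝ᵥ w₀ ≠ 0) {w : ι → ℤ} (hw : w ∈ intKernelOn S V) :
    (Int.cast ∘ w) ⬝ᵥ (y - ((Int.cast ∘ w₀) ⬝ᵥ y / (a ⬝ᵥ w₀ : ℤ)) • (Int.cast ∘ a)) = 0 := by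
  set α := a ⬝ᵥ w₀
  set δ := a ⬝ᵥ w
  have hlin (v : ι → ℤ) : v ⬝ᵥ (α • w - δ • w₀) = α * (v ⬝ᵥ w) - δ * (v ⬝ᵥ w₀) := by
    rw [dotProduct_sub, dotProduct_smul, dotProduct_smul, smul_eq_mul, smul_eq_mul]
  have hcomb : (α : K) * ((Int.cast ∘ w) ⬝ᵥ y) - δ * ((Int.cast ∘ w₀) ⬝ᵥ y) = 0 := by
    have hmem : α • w - δ • w₀ ∈ intKernelOn S (insert a V) :=
      ⟨fun j hj => by simp [hw.1 j hj, hw₀.1 j hj], Set.forall_mem_insert.2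
        ⟨by rw [hlin]; ring, fun v hv => by rw [hlin, hw.2 v hv, hw₀.2 v hv]; ring⟩⟩
    have hcast : (Int.cast ∘ (α • w - δ • w₀) : ι → K) =
        (α : K) • (Int.cast ∘ w) - (δ : K) • (Int.cast ∘ w₀) := by
      ext j; simp
    have := hy _ hmem
    rwa [hcast, sub_dotProduct, smul_dotProduct, smul_dotProduct, smul_eq_mul, smul_eq_mul] at this
  have hδ : (Int.cast ∘ w : ι → K) ⬝ᵥ (Int.cast ∘ a) = δ := by
    simpa [δ, dotProduct_comm w] using ((Int.castRingHom K).map_dotProduct w a).symm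
  have hα' : (α : K) ≠ 0 := by exact_mod_cast hα
  rw [dotProduct_sub, dotProduct_smul, hδ, smul_eq_mul, ← mul_right_inj' hα', mul_zero]
  field_simp
  linear_combination hcomb

theorem exists_mem_span_eqOn_of_orthogonal_intKernelOn (S : Set ι) {V : Set (ι → ℤ)}
    (hV : V.Finite) (y : ι → K) (hy : ∀ w ∈ intKernelOn S V, (Int.cast ∘ w) ⬝ᵥ y = 0) :
    ∃ z ∈ Submodule.span K ((Int.cast ∘ ·) '' V), Set.EqOn y z S := by
  classical
  induction V, hV using Set.Finite.induction_on generalizing y with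
  | empty =>
    refine ⟨0, zero_mem _, fun j hj => ?_⟩
    have hsingle : Pi.single j 1 ∈ intKernelOn S ∅ :=
      ⟨fun l hl => Pi.single_eq_of_ne (by rintro rfl; exact hl hj) _, by simp⟩
    simpa [Function.comp_def, Pi.single_apply, dotProduct] using hy _ hsingle
  | @insert a V _ _ ih =>
    rw [Set.image_insert_eq]
    by_cases hker : ∀ w ∈ intKernelOn S V, a ⬝ᵥ w = 0
    · obtain ⟨z, hz, hyz⟩ :=
        ih y fun w hw => hy w ⟨hw.1, Set.forall_mem_insert.2 ⟨hker w hw, hw.2⟩⟩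
      exact ⟨z, Submodule.span_mono (Set.subset_insert _ _) hz, hyz⟩
    push Not at hker
    obtain ⟨w₀, hw₀, hα⟩ := hker
    set γ : K := (Int.cast ∘ w₀) ⬝ᵥ y / (a ⬝ᵥ w₀ : ℤ)
    obtain ⟨z, hz, hyz⟩ := ih (y - γ • (Int.cast ∘ a)) fun w hw =>
      dotProduct_sub_smul_eq_zero_of_orthogonal_intKernelOn hy hw₀ hα hw
    refine ⟨γ • (Int.cast ∘ a) + z, Submodule.mem_span_insert.2 ⟨γ, z, hz, rfl⟩, fun j hj => ?_⟩
    simpa [sub_eq_iff_eq_add'] using hyz hj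

theorem exists_forall_mem_eq_sum_of_orthogonal_intKernelOn {κ : Type*} [Fintype κ] (S : Set ι)
    (r : κ → ι → ℤ) (y : ι → K)
    (hy : ∀ w ∈ intKernelOn S (Set.range r), (Int.cast ∘ w) ⬝ᵥ y = 0) :
    ∃ c : κ → K, ∀ j ∈ S, y j = ∑ i, c i * r i j := by
  obtain ⟨z, hz, hyz⟩ :=
    exists_mem_span_eqOn_of_orthogonal_intKernelOn S (Set.finite_range r) y hy
  rw [← Set.range_comp] at hz
  obtain ⟨c, rfl⟩ := Submodule.mem_span_range_iff_exists_fun K |>.1 hz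
  exact ⟨c, fun j hj => by simp [hyz hj, Finset.sum_apply]⟩

end IntKernel

theorem Real.log_prod_pow {ι : Type*} [Fintype ι] (P : ι → ℝ) (q : ι → ℕ)
    (hq : ∀ j, P j = 0 → q j = 0) : Real.log (∏ j, P j ^ q j) = ∑ j, q j * Real.log (P j) := by
  rw [Real.log_prod fun j _ => ?_]
  · simp_rw [Real.log_pow]
  · by_cases hPj : P j = 0
    · simp [hPj, hq j hPj]
    · exact pow_ne_zero _ hPj

theorem dotProduct_log_eq_zero_of_toric {ι κ : Type*} [Fintype ι] (A : Matrix κ ι ℕ) (P : ι → ℝ)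
    (hrel : ∀ u v : ι → ℕ, (∀ i, ∑ j, A i j * u j = ∑ j, A i j * v j) →
      ∏ j, P j ^ u j = ∏ j, P j ^ v j)
    {w : ι → ℤ} (hw : w ∈ intKernelOn {j | P j ≠ 0} (Set.range fun i j => (A i j : ℤ))) :
    (Int.cast ∘ w) ⬝ᵥ (Real.log ∘ P) = 0 := by
  set u : ι → ℕ := fun j => (w j).toNat
  set v : ι → ℕ := fun j => (-w j).toNat
  have hwuv (j : ι) : (u j : ℤ) - v j = w j := Int.toNat_sub_toNat_neg (w j)
  have huv (i : κ) : ∑ j, A i j * u j = ∑ j, A i j * v j := by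
    have := hw.2 _ ⟨i, rfl⟩
    simp only [dotProduct, ← hwuv, mul_sub, sum_sub_distrib, sub_eq_zero] at this
    exact_mod_cast this
  have hu (j : ι) (hPj : P j = 0) : u j = 0 := by simp [u, hw.1 j (by simpa using hPj)]
  have hv (j : ι) (hPj : P j = 0) : v j = 0 := by simp [v, hw.1 j (by simpa using hPj)]
  calc (Int.cast ∘ w) ⬝ᵥ (Real.log ∘ P)
      = ∑ j, (u j : ℝ) * Real.log (P j) - ∑ j, (v j : ℝ) * Real.log (P j) := by
        simp only [dotProduct, Function.comp_apply, ← hwuv, ← sum_sub_distrib]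
        push_cast; simp only [sub_mul]
    _ = 0 := by
        rw [← Real.log_prod_pow P u hu, ← Real.log_prod_pow P v hv, hrel u v huv, sub_self]

theorem exists_factorization_of_log_eq_sum {ι κ : Type*} [Fintype κ] (A : Matrix κ ι ℕ)
    (P : ι → ℝ) (hP : ∀ j, 0 ≤ P j)
    (hfeas : ∀ j, P j = 0 → ¬ {i | A i j ≠ 0} ⊆ ⋃ l ∈ {l | P l ≠ 0}, {i | A i l ≠ 0})
    (c : κ → ℝ) (hc : ∀ j, P j ≠ 0 → Real.log (P j) = ∑ i, c i * A i j) :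
    ∃ t : κ → ℝ, (∀ i, 0 ≤ t i) ∧ ∀ j, P j = ∏ i, t i ^ A i j := by
  set U := ⋃ l ∈ {l | P l ≠ 0}, {i | A i l ≠ 0}
  refine ⟨U.indicator fun i => Real.exp (c i),
    fun i => Set.indicator_nonneg (fun i _ => (Real.exp_pos _).le) i, fun j => ?_⟩
  by_cases hPj : P j = 0
  · obtain ⟨i, hAij, hiU⟩ := Set.not_subset.1 (hfeas j hPj)
    rw [hPj, eq_comm]
    exact prod_eq_zero (mem_univ i) (by simp [Set.indicator_of_notMem hiU, zero_pow hAij])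
  · have hfactor (i : κ) :
        U.indicator (fun i => Real.exp (c i)) i ^ A i j = Real.exp (c i * A i j) := by
      by_cases hAij : A i j = 0
      · simp [hAij]
      · have hiU : i ∈ U := Set.mem_biUnion (x := j) hPj hAij
        rw [Set.indicator_of_mem hiU, ← Real.exp_nat_mul, mul_comm]
    calc P j = Real.exp (Real.log (P j)) := (Real.exp_log ((hP j).lt_of_ne' hPj)).symm
      _ = ∏ i, Real.exp (c i * A i j) := by rw [hc j hPj, Real.exp_sum]
      _ = ∏ i, U.indicator (fun i => Real.exp (c i)) i ^ A i j := by simp_rw [hfactor]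

theorem factorization_iff_toric_and_feasible_general {d m : ℕ} (A : Matrix (Fin d) (Fin m) ℕ)
    (P : Fin m → ℝ) (hP : ∀ j, 0 ≤ P j) :
    (∃ t : Fin d → ℝ, (∀ i, 0 ≤ t i) ∧ ∀ j, P j = ∏ i, t i ^ A i j) ↔
      ((∀ u v : Fin m → ℕ, (∀ i, ∑ j, A i j * u j = ∑ j, A i j * v j) →
          ∏ j, P j ^ u j = ∏ j, P j ^ v j) ∧
        ∀ j : Fin m, P j = 0 →
          ¬ ({i : Fin d | A i j ≠ 0} ⊆ ⋃ l ∈ {l : Fin m | P l ≠ 0}, {i : Fin d | A i l ≠ 0})) := by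
  constructor
  · rintro ⟨t, -, hPt⟩
    refine ⟨fun u v huv => ?_, not_subset_biUnion_of_eq_prod_pow A t P hPt⟩
    simp only [hPt, prod_prod_pow_pow_eq_prod_pow_sum, huv]
  · rintro ⟨hrel, hfeas⟩
    obtain ⟨c, hc⟩ := exists_forall_mem_eq_sum_of_orthogonal_intKernelOn {j | P j ≠ 0}
      (fun i j => (A i j : ℤ)) (Real.log ∘ P) fun _ hw =>
        dotProduct_log_eq_zero_of_toric A P hrel hw
    exact exists_factorization_of_log_eq_sum A P hP hfeas c fun j hj => by simpa using hc j hj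

/-- Factorization theorem: A probability distribution `P` factors according
to `A` if and only if `P` lies in the nonnegative toric variety `X_A` and the support of
`P` is `A`-feasible. -/
theorem factorization_iff_toric_and_feasible {d m : ℕ} (A : Matrix (Fin d) (Fin m) ℕ)
    (P : Fin m → ℝ) (hP : ∀ j, 0 ≤ P j) (hsum : ∑ j, P j = 1) :
    (∃ t : Fin d → ℝ, (∀ i, 0 ≤ t i) ∧ ∀ j, P j = ∏ i, t i ^ A i j) ↔
      ((∀ u v : Fin m → ℕ, (∀ i, ∑ j, A i j * u j = ∑ j, A i j * v j) →
          ∏ j, P j ^ u j = ∏ j, P j ^ v j) ∧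
        ∀ j : Fin m, P j = 0 →
          ¬ ({i : Fin d | A i j ≠ 0} ⊆ ⋃ l ∈ {l : Fin m | P l ≠ 0}, {i : Fin d | A i l ≠ 0})) :=
  factorization_iff_toric_and_feasible_general A P hP
end

section
/- The nonnegative toric variety X_A equals the topological closure (in ℝ_{≥0}^m with the Euclidean topology) of the image of the monomial map φ_A; equivalently, a probability distribution P lies in X_A if and only if P factors according to A or is a limit of distributions that factor according to A. -/
/-!
`X_A` is closed and contains every `φ_A t`, which gives one inclusion. Conversely, let `x ∈ X_A`
have support `S` and write `a_j` for the columns of `A`.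

* The binomial relations say that the `ℚ`-linear form `q ↦ ∑ q_j log x_j` on `ℚ^S` vanishes on
  the rational relations among the `a_j`, `j ∈ S`; hence it factors through `A` and there is
  `w ∈ ℝ^d` with `⟨a_j, w⟩ = log x_j` for `j ∈ S`.
* `S` is a face: there is `c ∈ ℝ^d` with `⟨a_j, c⟩ = 0` on `S` and `⟨a_j, c⟩ > 0` off `S`.
  Otherwise, by Farkas' lemma, some `-a_k` with `k ∉ S` is a nonnegative combination of all the
  `a_j` and of the `-a_j`, `j ∈ S`. By Carathéodory this combination may be taken over linearly
  independent vectors, so its coefficients are rational; clearing denominators yields `u, v` with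
  `A u = A v`, `u_k > 0` and `v` supported in `S`, so that `x^u = 0 ≠ x^v`.

Then `φ_A (exp (w - n c)) → x` as `n → ∞`.
-/

open Finset Real Filter

theorem LinearMap.exists_comp_eq_of_ker_le {K V W U : Type*} [Field K] [AddCommGroup V]
    [Module K V] [AddCommGroup W] [Module K W] [AddCommGroup U] [Module K U]
    (f : V →ₗ[K] W) (h : V →ₗ[K] U) (hker : ker f ≤ ker h) :
    ∃ g : W →ₗ[K] U, g ∘ₗ f = h := by
  obtain ⟨s, hs⟩ := f.rangeRestrict.exists_rightInverse_of_surjective f.range_rangeRestrict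
  obtain ⟨g, hg⟩ := (h ∘ₗ s).exists_extend
  refine ⟨g, LinearMap.ext fun v => ?_⟩
  have hsv : s (f.rangeRestrict v) - v ∈ ker f := by
    simp only [LinearMap.mem_ker, map_sub, sub_eq_zero]
    exact congr(Subtype.val $(congr($hs (f.rangeRestrict v))))
  calc g (f v) = h (s (f.rangeRestrict v)) := congr($hg (f.rangeRestrict v))
    _ = h v := by rw [← sub_eq_zero, ← map_sub]; exact hker hsv

section Caratheodory

variable {𝕜 E ι : Type*} [Field 𝕜] [LinearOrder 𝕜] [IsStrictOrderedRing 𝕜]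
  [AddCommGroup E] [Module 𝕜 E]

theorem exists_linearIndepOn_sum_eq (b : ι → E) (s : Finset ι) (c : ι → 𝕜)
    (hc : ∀ i ∈ s, 0 ≤ c i) :
    ∃ t ⊆ s, LinearIndepOn 𝕜 b t ∧ ∃ μ : ι → 𝕜, (∀ i ∈ t, 0 ≤ μ i) ∧
      ∑ i ∈ t, μ i • b i = ∑ i ∈ s, c i • b i := by
  classical
  induction s using Finset.strongInduction generalizing c with
  | _ s ih =>
  by_cases hind : LinearIndepOn 𝕜 b s
  · exact ⟨s, subset_rfl, hind, c, hc, rfl⟩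
  obtain ⟨g, hg, i₁, hi₁, hgi₁⟩ := not_linearIndepOn_finset_iff.mp hind
  obtain ⟨g, hg, hpos⟩ :
      ∃ g : ι → 𝕜, ∑ i ∈ s, g i • b i = 0 ∧ (s.filter (0 < g ·)).Nonempty := by
    rcases hgi₁.lt_or_gt with hneg | hpos
    · exact ⟨-g, by simp [neg_smul, hg], i₁, by simpa [hi₁] using hneg⟩
    · exact ⟨g, hg, i₁, by simpa [hi₁] using hpos⟩
  -- `r` is the largest step along `-g` keeping all coefficients nonnegative; it kills `c i₀`
  obtain ⟨i₀, hi₀, hmin⟩ := (s.filter (0 < g ·)).exists_min_image (fun i => c i / g i) hpos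
  rw [mem_filter] at hi₀
  set r := c i₀ / g i₀
  have hc' : ∀ i ∈ s.erase i₀, 0 ≤ c i - r * g i := by
    intro i hi
    have hi := (mem_erase.mp hi).2
    rcases le_or_gt (g i) 0 with hgi | hgi
    · nlinarith [hc i hi, div_nonneg (hc i₀ hi₀.1) hi₀.2.le]
    · rw [sub_nonneg, ← le_div_iff₀ hgi]
      exact hmin i (mem_filter.mpr ⟨hi, hgi⟩)
  obtain ⟨t, hts, ht, μ, hμ, hsum⟩ := ih _ (erase_ssubset hi₀.1) _ hc'
  refine ⟨t, hts.trans (erase_subset _ _), ht, μ, hμ, ?_⟩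
  have hzero : (c i₀ - r * g i₀) • b i₀ = 0 := by
    rw [div_mul_cancel₀ _ hi₀.2.ne', sub_self, zero_smul]
  calc ∑ i ∈ t, μ i • b i = ∑ i ∈ s, (c i - r * g i) • b i := by
        rw [hsum, ← add_sum_erase s _ hi₀.1, hzero, zero_add]
    _ = ∑ i ∈ s, c i • b i := by
        simp only [sub_smul, sum_sub_distrib, mul_smul, ← smul_sum, hg, smul_zero, sub_zero]

end Caratheodory

section IntegerCoefficients

variable {ι κ : Type*} [Fintype ι] [Finite κ] {v : ι → κ → ℤ} {y : κ → ℤ} {μ : ι → ℝ}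

theorem exists_nat_mul_eq_intCast_of_linearIndependent
    (hv : LinearIndependent ℝ fun i => ((↑) : ℤ → ℝ) ∘ v i)
    (hy : ∑ i, μ i • ((↑) : ℤ → ℝ) ∘ v i = ((↑) : ℤ → ℝ) ∘ y) :
    ∃ N : ℕ, 0 < N ∧ ∃ z : ι → ℤ, ∀ i, N * μ i = z i := by
  -- `y` and the `v i` are dependent over `ℝ`, hence over `ℤ`
  obtain ⟨g, hg, o, ho⟩ : ∃ g : Option ι → ℤ, g none • y + ∑ i, g (some i) • v i = 0 ∧
      ∃ o, g o ≠ 0 := by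
    have hdep : ¬ LinearIndependent ℤ fun o : Option ι => o.elim y v := by
      rw [← linearIndependent_algebraMap_comp_iff (S := ℝ)]
      intro h
      have := Fintype.linearIndependent_iff.mp h (fun o => o.elim (-1) μ)
        (by simp [Fintype.sum_option, hy]) none
      simp at this
    simpa [Fintype.sum_option] using Fintype.not_linearIndependent_iff.mp hdep
  have hvℤ : LinearIndependent ℤ v := linearIndependent_algebraMap_comp_iff.mp hv
  have hnone : g none ≠ 0 := by
    intro h0
    rw [h0, zero_smul, zero_add] at hg
    have := Fintype.linearIndependent_iff.mp hvℤ _ hg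
    cases o <;> simp_all
  have hμg : ∀ i, (g none : ℝ) * μ i = -g (some i) := by
    have hrel : ∑ i, ((g none : ℝ) * μ i + g (some i)) • ((↑) : ℤ → ℝ) ∘ v i = 0 := by
      ext j
      have hgj := congr(((↑) : ℤ → ℝ) ($hg j))
      have hyj := congrFun hy j
      simp only [Pi.add_apply, Pi.smul_apply, Finset.sum_apply, smul_eq_mul, Pi.zero_apply,
        Function.comp_apply] at hgj hyj ⊢
      push_cast at hgj
      simp only [add_mul, sum_add_distrib, mul_assoc, ← mul_sum, hyj]
      linear_combination hgj
    intro i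
    linear_combination Fintype.linearIndependent_iff.mp hv _ hrel i
  refine ⟨(g none).natAbs, Int.natAbs_pos.mpr hnone, ?_⟩
  rw [Nat.cast_natAbs, Int.cast_abs]
  rcases abs_choice (g none : ℝ) with h | h <;> rw [h]
  · exact ⟨fun i => -g (some i), fun i => by rw [hμg]; push_cast; ring⟩
  · exact ⟨fun i => g (some i), fun i => by rw [neg_mul, hμg]; ring⟩

theorem exists_nat_smul_eq_sum_of_linearIndependent
    (hv : LinearIndependent ℝ fun i => ((↑) : ℤ → ℝ) ∘ v i) (hμ : ∀ i, 0 ≤ μ i)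
    (hy : ∑ i, μ i • ((↑) : ℤ → ℝ) ∘ v i = ((↑) : ℤ → ℝ) ∘ y) :
    ∃ N : ℕ, 0 < N ∧ ∃ n : ι → ℕ, N • y = ∑ i, n i • v i := by
  obtain ⟨N, hN, z, hz⟩ := exists_nat_mul_eq_intCast_of_linearIndependent hv hy
  have hz₀ : ∀ i, 0 ≤ z i := fun i => by
    exact_mod_cast hz i ▸ mul_nonneg (Nat.cast_nonneg N) (hμ i)
  refine ⟨N, hN, fun i => (z i).toNat, funext fun j => Int.cast_injective (α := ℝ) ?_⟩
  have hyj := congrFun hy j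
  simp only [Finset.sum_apply, Pi.smul_apply, smul_eq_mul, Function.comp_apply] at hyj
  simp only [Pi.smul_apply, Finset.sum_apply, nsmul_eq_mul, Int.cast_mul, Int.cast_natCast,
    Int.cast_sum, ← hyj, mul_sum, ← mul_assoc, hz]
  exact sum_congr rfl fun i _ => by simp [Int.toNat_of_nonneg (hz₀ i)]

end IntegerCoefficients

namespace PointedCone

variable {ι : Type*} [Fintype ι]

theorem mem_hull_range_iff {𝕜 E : Type*} [Field 𝕜] [LinearOrder 𝕜] [IsStrictOrderedRing 𝕜]
    [AddCommGroup E] [Module 𝕜 E] {b : ι → E} {y : E} :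
    y ∈ hull 𝕜 (Set.range b) ↔ ∃ c : ι → 𝕜, (∀ i, 0 ≤ c i) ∧ ∑ i, c i • b i = y := by
  rw [hull, Submodule.mem_span_range_iff_exists_fun]
  constructor
  · rintro ⟨c, rfl⟩
    exact ⟨fun i => c i, fun i => (c i).2, rfl⟩
  · rintro ⟨c, hc, rfl⟩
    exact ⟨fun i => ⟨c i, hc i⟩, rfl⟩

section Topology

variable {F : Type*} [AddCommGroup F] [TopologicalSpace F] [IsTopologicalAddGroup F]
  [Module ℝ F] [ContinuousSMul ℝ F] [T2Space F]

theorem isClosed_hull_range (b : ι → F) : IsClosed (hull ℝ (Set.range b) : Set F) := by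
  have hunion : (hull ℝ (Set.range b) : Set F) = ⋃ (t : Finset ι) (_ : LinearIndepOn ℝ b t),
      Fintype.linearCombination ℝ (fun i : t => b i) '' Set.Ici 0 := by
    ext y
    simp only [SetLike.mem_coe, Set.mem_iUnion, Set.mem_image, Set.mem_Ici,
      Fintype.linearCombination_apply]
    constructor
    · intro hy
      obtain ⟨c, hc, rfl⟩ := mem_hull_range_iff.mp hy
      obtain ⟨t, -, ht, μ, hμ, hsum⟩ := exists_linearIndepOn_sum_eq b univ c fun i _ => hc i
      exact ⟨t, ht, fun i => μ i, fun i => hμ i i.2, by rw [← hsum, ← sum_attach t]; rfl⟩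
    · rintro ⟨t, -, μ, hμ, rfl⟩
      exact sum_mem fun i _ => smul_mem _ (show (0 : ℝ) ≤ μ i from hμ i) (subset_hull ⟨i, rfl⟩)
  rw [hunion]
  refine isClosed_iUnion_of_finite fun t => isClosed_iUnion_of_finite fun ht => ?_
  exact (LinearMap.isClosedEmbedding_of_injective (LinearMap.ker_eq_bot.mpr
    ht.fintypeLinearCombination_injective)).isClosedMap _ isClosed_Ici

theorem exists_strongDual_of_notMem_hull_range [LocallyConvexSpace ℝ F] {b : ι → F} {y : F}
    (hy : y ∉ hull ℝ (Set.range b)) : ∃ f : StrongDual ℝ F, (∀ i, 0 ≤ f (b i)) ∧ f y < 0 := by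
  let C : ProperCone ℝ F := ⟨hull ℝ (Set.range b), isClosed_hull_range b⟩
  obtain ⟨f, hf, hfy⟩ := C.hyperplane_separation_point hy
  exact ⟨f, fun i => hf _ (subset_hull ⟨i, rfl⟩), hfy⟩

end Topology

theorem exists_nat_smul_eq_sum_of_intCast_mem_hull {κ : Type*} [Finite κ] {b : ι → κ → ℤ}
    {y : κ → ℤ}
    (hy : ((↑) : ℤ → ℝ) ∘ y ∈ hull ℝ (Set.range fun i => ((↑) : ℤ → ℝ) ∘ b i)) :
    ∃ N : ℕ, 0 < N ∧ ∃ n : ι → ℕ, N • y = ∑ i, n i • b i := by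
  classical
  obtain ⟨c, hc, hcy⟩ := mem_hull_range_iff.mp hy
  obtain ⟨t, -, ht, μ, hμ, hsum⟩ :=
    exists_linearIndepOn_sum_eq (fun i => ((↑) : ℤ → ℝ) ∘ b i) univ c fun i _ => hc i
  obtain ⟨N, hN, n, hn⟩ := exists_nat_smul_eq_sum_of_linearIndependent ht
    (μ := fun i : t => μ i) (fun i => hμ i i.2) ((sum_coe_sort t _).trans (hsum.trans hcy))
  refine ⟨N, hN, fun i => if h : i ∈ t then n ⟨i, h⟩ else 0, ?_⟩
  calc N • y = ∑ i : t, n i • b i := hn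
    _ = ∑ i ∈ t, (if h : i ∈ t then n ⟨i, h⟩ else 0) • b i :=
        (sum_congr rfl fun i _ => by simp).trans (sum_coe_sort t _)
    _ = _ := sum_subset (subset_univ t) fun i _ hi => by simp [hi]

end PointedCone

variable {ι κ : Type*}

def monomialMap [Fintype ι] (A : Matrix ι κ ℕ) (t : ι → ℝ) : κ → ℝ := fun j => ∏ i, t i ^ A i j

def toricVariety [Fintype κ] (A : Matrix ι κ ℕ) : Set (κ → ℝ) :=
  {x | (∀ j, 0 ≤ x j) ∧ ∀ u v : κ → ℕ, (∀ i, ∑ j, A i j * u j = ∑ j, A i j * v j) →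
      ∏ j, x j ^ u j = ∏ j, x j ^ v j}

theorem prod_monomialMap_pow [Fintype ι] [Fintype κ] (A : Matrix ι κ ℕ) (t : ι → ℝ)
    (u : κ → ℕ) : ∏ j, monomialMap A t j ^ u j = ∏ i, t i ^ ∑ j, A i j * u j := by
  simp only [monomialMap, ← prod_pow, ← pow_mul]
  rw [Finset.prod_comm]
  simp only [prod_pow_eq_pow_sum]

theorem monomialMap_exp [Fintype ι] (A : Matrix ι κ ℕ) (w : ι → ℝ) (j : κ) :
    monomialMap A (fun i => exp (w i)) j = exp (∑ i, A i j * w i) := by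
  simp only [monomialMap, ← exp_nat_mul, exp_sum]

namespace toricVariety

variable [Fintype κ]

theorem isClosed (A : Matrix ι κ ℕ) : IsClosed (toricVariety A) := by
  have hcont : ∀ u : κ → ℕ, Continuous fun x : κ → ℝ => ∏ j, x j ^ u j := fun u => by fun_prop
  simp only [toricVariety, Set.ofPred_and, Set.ofPred_forall]
  exact (isClosed_iInter fun j => isClosed_le continuous_const (continuous_apply j)).inter
    (isClosed_iInter fun u => isClosed_iInter fun v => isClosed_iInter fun _ =>
      isClosed_eq (hcont u) (hcont v))

variable {A : Matrix ι κ ℕ} {x : κ → ℝ}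

theorem monomialMap_mem [Fintype ι] {t : ι → ℝ} (ht : ∀ i, 0 ≤ t i) :
    monomialMap A t ∈ toricVariety A :=
  ⟨fun j => prod_nonneg fun i _ => pow_nonneg (ht i) _, fun u v huv => by
    simp only [prod_monomialMap_pow, huv]⟩

theorem sum_intCast_mul_log_eq_zero (hx : x ∈ toricVariety A) {z : κ → ℤ}
    (hz : ∀ j, x j = 0 → z j = 0) (hAz : ∀ i, ∑ j, (A i j : ℤ) * z j = 0) :
    ∑ j, (z j : ℝ) * log (x j) = 0 := by
  have hrel : ∀ i, ∑ j, A i j * (z j).toNat = ∑ j, A i j * (-z j).toNat := by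
    intro i
    zify
    simp only [← sub_eq_zero, ← sum_sub_distrib, ← mul_sub, Int.toNat_sub_toNat_neg, hAz]
  have hne : ∀ n : κ → ℤ, (∀ j, x j = 0 → n j = 0) → ∀ j ∈ univ, x j ^ (n j).toNat ≠ 0 := by
    intro n hn j _
    by_cases hj : x j = 0
    · simp [hn j hj]
    · exact pow_ne_zero _ hj
  have := congr(log $(hx.2 _ _ hrel))
  rw [log_prod (hne z hz), log_prod (hne (fun j => -z j) (by simpa using hz)), ← sub_eq_zero,
    ← sum_sub_distrib] at this
  simpa [← sub_mul, ← Int.cast_natCast (R := ℝ), ← Int.cast_sub, Int.toNat_sub_toNat_neg]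
    using this

theorem sum_ratCast_mul_log_eq_zero (hx : x ∈ toricVariety A) {q : κ → ℚ}
    (hq : ∀ j, x j = 0 → q j = 0) (hAq : ∀ i, ∑ j, (A i j : ℚ) * q j = 0) :
    ∑ j, (q j : ℝ) * log (x j) = 0 := by
  obtain ⟨⟨b, hb⟩, hbq⟩ := IsLocalization.exist_integer_multiples_of_finite (nonZeroDivisors ℤ) q
  choose z hz using hbq
  simp only [zsmul_eq_mul, algebraMap_int_eq, eq_intCast] at hz
  have hlog := sum_intCast_mul_log_eq_zero hx (z := z) (fun j hj => by simpa [hq j hj] using hz j)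
    fun i => by
      have : ((∑ j, (A i j : ℤ) * z j : ℤ) : ℚ) = b * ∑ j, (A i j : ℚ) * q j := by
        push_cast
        simp only [hz, mul_sum, mul_left_comm]
      rw [hAq, mul_zero] at this
      exact_mod_cast this
  have hzq : ∀ j, (z j : ℝ) = b * q j := fun j => by exact_mod_cast congr(((↑) : ℚ → ℝ) $(hz j))
  simp only [hzq, mul_assoc, ← mul_sum] at hlog
  exact (mul_eq_zero.mp hlog).resolve_left (by exact_mod_cast nonZeroDivisors.ne_zero hb)

variable [Fintype ι]

theorem exists_sum_mul_eq_log (hx : x ∈ toricVariety A) :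
    ∃ w : ι → ℝ, ∀ j, x j ≠ 0 → ∑ i, A i j * w i = log (x j) := by
  classical
  let col : κ → ι → ℚ := fun j i => if x j = 0 then 0 else A i j
  obtain ⟨g, hg⟩ := LinearMap.exists_comp_eq_of_ker_le (Fintype.linearCombination ℚ col)
    (Fintype.linearCombination ℚ fun j => log (x j)) fun q hq => by
      have := sum_ratCast_mul_log_eq_zero hx (q := fun j => if x j = 0 then 0 else q j)
        (by simp +contextual) fun i => by
          simpa [col, Fintype.linearCombination_apply, mul_comm] using congr_fun hq i
      -- restricting `q` to the support of `x` does not change `∑ q_j log x_j`, as `log 0 = 0`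
      rw [LinearMap.mem_ker, Fintype.linearCombination_apply, ← this]
      refine sum_congr rfl fun j _ => ?_
      by_cases h : x j = 0 <;> simp [h, Rat.smul_def]
  refine ⟨fun i => g fun i' => if i = i' then 1 else 0, fun j hj => ?_⟩
  have := congr($hg (Pi.single j 1))
  simp only [LinearMap.comp_apply, Fintype.linearCombination_apply_single, one_smul] at this
  rw [← this, LinearMap.pi_apply_eq_sum_univ]
  simp [col, hj, Rat.smul_def]

theorem exists_sum_mul_pos (hx : x ∈ toricVariety A) {k : κ} (hk : x k = 0) :
    ∃ c : ι → ℝ, (∀ j, x j ≠ 0 → ∑ i, A i j * c i = 0) ∧ (∀ j, 0 ≤ ∑ i, A i j * c i) ∧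
      0 < ∑ i, A i k * c i := by
  classical
  let b : κ ⊕ κ → ι → ℤ :=
    Sum.elim (fun j i => A i j) fun j i => -if x j = 0 then 0 else (A i j : ℤ)
  let y : ι → ℤ := fun i => -A i k
  by_cases hy : ((↑) : ℤ → ℝ) ∘ y ∈ PointedCone.hull ℝ (Set.range fun o => ((↑) : ℤ → ℝ) ∘ b o)
  · exfalso
    obtain ⟨N, hN, n, hn⟩ := PointedCone.exists_nat_smul_eq_sum_of_intCast_mem_hull hy
    let u : κ → ℕ := fun j => n (.inl j) + if j = k then N else 0
    let v : κ → ℕ := fun j => if x j = 0 then 0 else n (.inr j)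
    have huv : ∀ i, ∑ j, A i j * u j = ∑ j, A i j * v j := by
      intro i
      have := congrFun hn i
      simp only [Fintype.sum_sum_type, Pi.smul_apply, Finset.sum_apply, Sum.elim_inl,
        Sum.elim_inr, b, y, nsmul_eq_mul, Pi.mul_apply, Pi.natCast_apply, mul_ite, mul_zero,
        mul_neg, sum_neg_distrib, mul_comm _ (A i _ : ℤ)] at this
      zify
      simp only [u, v]
      push_cast
      simp only [mul_add, sum_add_distrib, mul_ite, mul_zero, sum_ite_eq', mem_univ, if_true]
      linear_combination -this
    have hu : ∏ j, x j ^ u j = 0 := prod_eq_zero (mem_univ k) (by simp [u, hk, hN.ne'])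
    have hv : ∏ j, x j ^ v j ≠ 0 := prod_ne_zero_iff.mpr fun j _ => by
      by_cases hj : x j = 0 <;> simp [v, hj]
    exact hv (hx.2 u v huv ▸ hu)
  · obtain ⟨f, hf, hfy⟩ := PointedCone.exists_strongDual_of_notMem_hull_range hy
    let c : ι → ℝ := fun i => f fun i' => if i = i' then 1 else 0
    have hfc : ∀ w : ι → ℤ, f (((↑) : ℤ → ℝ) ∘ w) = ∑ i, w i * c i := fun w => by
      rw [← f.coe_coe, LinearMap.pi_apply_eq_sum_univ]
      simp [c]
    refine ⟨c, fun j hj => ?_, fun j => by simpa [hfc, b] using hf (.inl j),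
      by simpa [hfc, y] using hfy⟩
    have h₁ := hf (.inl j)
    have h₂ := hf (.inr j)
    simp [hfc, b, hj] at h₁ h₂
    linarith

theorem exists_sum_mul_eq_zero_and_pos (hx : x ∈ toricVariety A) :
    ∃ c : ι → ℝ, ∀ j, (x j ≠ 0 → ∑ i, A i j * c i = 0) ∧ (x j = 0 → 0 < ∑ i, A i j * c i) := by
  have hC : ∀ k, ∃ c : ι → ℝ, (∀ j, x j ≠ 0 → ∑ i, A i j * c i = 0) ∧
      (∀ j, 0 ≤ ∑ i, A i j * c i) ∧ (x k = 0 → 0 < ∑ i, A i k * c i) := fun k => by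
    by_cases hk : x k = 0
    · obtain ⟨c, h₀, h₁, h₂⟩ := exists_sum_mul_pos hx hk
      exact ⟨c, h₀, h₁, fun _ => h₂⟩
    · exact ⟨0, by simp, by simp, fun h => absurd h hk⟩
  choose C hC₀ hC₁ hC₂ using hC
  refine ⟨∑ k, C k, fun j => ⟨fun hj => ?_, fun hj => ?_⟩⟩ <;>
    simp only [Finset.sum_apply, mul_sum] <;> rw [sum_comm]
  · exact sum_eq_zero fun k _ => hC₀ k j hj
  · exact sum_pos' (fun k _ => hC₁ k j) ⟨j, mem_univ j, hC₂ j hj⟩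

theorem mem_closure_image_monomialMap (hx : x ∈ toricVariety A) :
    x ∈ closure (monomialMap A '' {t | ∀ i, 0 ≤ t i}) := by
  obtain ⟨w, hw⟩ := exists_sum_mul_eq_log hx
  obtain ⟨c, hc⟩ := exists_sum_mul_eq_zero_and_pos hx
  let t : ℕ → ι → ℝ := fun n i => exp (w i - n * c i)
  have ht : ∀ n j, monomialMap A (t n) j = exp (∑ i, A i j * w i - n * ∑ i, A i j * c i) := by
    intro n j
    rw [monomialMap_exp, mul_sum, ← sum_sub_distrib]
    simp only [mul_sub, mul_left_comm]
  refine mem_closure_of_tendsto (b := atTop) (f := fun n => monomialMap A (t n))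
    (tendsto_pi_nhds.mpr fun j => ?_)
    (Eventually.of_forall fun n => ⟨t n, fun i => (exp_pos _).le, rfl⟩)
  simp only [ht]
  by_cases hj : x j = 0
  · rw [hj]
    refine tendsto_exp_atBot.comp (tendsto_atBot_add_const_left _ _ ?_)
    exact tendsto_neg_atTop_atBot.comp
      (tendsto_natCast_atTop_atTop.atTop_mul_const ((hc j).2 hj))
  · simp only [(hc j).1 hj, hw j hj, mul_zero, sub_zero, exp_log ((hx.1 j).lt_of_ne' hj)]
    exact tendsto_const_nhds

theorem eq_closure_image_monomialMap (A : Matrix ι κ ℕ) :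
    toricVariety A = closure (monomialMap A '' {t | ∀ i, 0 ≤ t i}) :=
  Set.Subset.antisymm (fun _ => mem_closure_image_monomialMap)
    ((isClosed A).closure_subset_iff.mpr (Set.image_subset_iff.mpr fun _ => monomialMap_mem))

end toricVariety

/-- Limit factorization theorem: The nonnegative toric variety `X_A` equals
the topological closure of the image of the monomial map `φ_A` on the nonnegative orthant. -/
theorem toric_variety_eq_closure_image {d m : ℕ} (A : Matrix (Fin d) (Fin m) ℕ) :
    {x : Fin m → ℝ | (∀ j, 0 ≤ x j) ∧
        ∀ u v : Fin m → ℕ, (∀ i, ∑ j, A i j * u j = ∑ j, A i j * v j) →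
          ∏ j, x j ^ u j = ∏ j, x j ^ v j} =
      closure ((fun (t : Fin d → ℝ) (j : Fin m) => ∏ i, t i ^ A i j) ''
        {t : Fin d → ℝ | ∀ i, 0 ≤ t i}) :=
  toricVariety.eq_closure_image_monomialMap A
end

section
/- For a nonnegative integer matrix A, the set X_A defined using nonnegative integer exponent vectors u,v with Au = Av coincides with the set Z_A defined analogously but allowing nonnegative real exponent vectors u,v with Au = Av. That is, if x ∈ ℝ_{≥0}^m satisfies x^u = x^v for all nonnegative integer u,v in the kernel relation Au = Av, then x^u = x^v holds for all nonnegative real u,v with Au = Av. -/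
/-!
Clearing denominators and taking `N`-th roots extends the hypothesis from natural to nonnegative
rational exponents. The real solutions of a linear system with rational coefficients are limits of
its rational solutions, so a nonnegative real pair `(u, v)` with `A u = A v` is a limit of
nonnegative rational pairs with the same relation and the same support. On vectors of fixed
support `u ↦ ∏ x_j ^ u_j` is continuous (the only jump of `t ↦ 0 ^ t` is at `t = 0`), so the
identity passes to the limit.
-/

open Finset Filter Topology

section
variable {κ : Type*} [Fintype κ]

def ratSpecializations (w : κ → ℝ) : Set (κ → ℚ) :=
  {q | ∀ a : κ → ℚ, ∑ k, (a k : ℝ) * w k = 0 → ∑ k, a k * q k = 0}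

theorem exists_ratSpecializations_sum_mul_eq (w : κ → ℝ) :
    ∃ (n : ℕ) (q : Fin n → κ → ℚ) (r : Fin n → ℝ),
      (∀ t, q t ∈ ratSpecializations w) ∧ ∀ k, w k = ∑ t, (q t k : ℝ) * r t := by
  -- Expand the coordinates of `w` in a `ℚ`-basis of their `ℚ`-span; by linear independence the
  -- coefficient vectors inherit every rational relation of `w`.
  let W : Submodule ℚ ℝ := Submodule.span ℚ (Set.range w)
  have : FiniteDimensional ℚ W := FiniteDimensional.span_of_finite ℚ (Set.finite_range w)
  let b := Module.finBasis ℚ W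
  let wW : κ → W := fun k => ⟨w k, Submodule.subset_span (Set.mem_range_self k)⟩
  refine ⟨_, fun t k => b.repr (wW k) t, fun t => b t, fun t a ha => ?_, fun k => ?_⟩
  · have : ∑ k, a k • wW k = 0 := Subtype.ext (by simpa [Rat.smul_def] using ha)
    simpa using congrArg (fun z => b.repr z t) this
  · have := congrArg Subtype.val (b.sum_repr (wW k))
    simp only [Submodule.coe_sum, Submodule.coe_smul, Rat.smul_def] at this
    exact this.symm

theorem mem_closure_ratSpecializations (w : κ → ℝ) :
    w ∈ closure ((fun q k => (q k : ℝ)) '' ratSpecializations w) := by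
  obtain ⟨n, q, r, hq, hw⟩ := exists_ratSpecializations_sum_mul_eq w
  let φ : (Fin n → ℝ) → κ → ℝ := fun s k => ∑ t, (q t k : ℝ) * s t
  have hr : r ∈ closure (Set.range fun (s : Fin n → ℚ) t => (s t : ℝ)) :=
    DenseRange.piMap (fun _ => Rat.denseRange_cast) r
  have hφ := mem_closure_image (f := φ) (by fun_prop) hr
  rw [show φ r = w from funext fun k => (hw k).symm, ← Set.range_comp] at hφ
  refine closure_mono ?_ hφ
  rintro _ ⟨s, rfl⟩
  refine ⟨fun k => ∑ t, q t k * s t, fun a ha => ?_, funext fun k => by simp [φ]⟩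
  simp_rw [mul_sum, ← mul_assoc]
  rw [sum_comm]
  exact sum_eq_zero fun t _ => by rw [← sum_mul, hq t a ha, zero_mul]

theorem eq_zero_of_mem_ratSpecializations {w : κ → ℝ} {q : κ → ℚ} (hq : q ∈ ratSpecializations w)
    {k : κ} (hk : w k = 0) : q k = 0 := by
  classical
  have h := hq (Pi.single k 1) (by simp [Pi.single_apply, apply_ite, ite_mul, hk])
  simpa [Pi.single_apply] using h

theorem mem_closure_nonneg_ratSpecializations {w : κ → ℝ} (hw : 0 ≤ w) :
    w ∈ closure {z | ∃ q ∈ ratSpecializations w, 0 ≤ q ∧ z = fun k => (q k : ℝ)} := by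
  let O : Set (κ → ℝ) := ⋂ k, {z | 0 < w k → 0 < z k}
  have hO : IsOpen O := isOpen_iInter_of_finite fun k => by
    by_cases hk : 0 < w k
    · simpa [hk] using isOpen_lt continuous_const (continuous_apply k)
    · simp only [hk, false_implies, Set.ofPred_true, isOpen_univ]
  refine closure_mono ?_ (hO.inter_closure ⟨by simp [O], mem_closure_ratSpecializations w⟩)
  rintro _ ⟨hzO, q, hq, rfl⟩
  refine ⟨q, hq, fun k => ?_, rfl⟩
  rcases (hw k).eq_or_lt with hk | hk
  · exact (eq_zero_of_mem_ratSpecializations hq hk.symm).ge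
  · have hzk := Set.mem_iInter.1 hzO k hk
    dsimp only at hzk
    exact_mod_cast hzk.le

theorem sum_mul_inl_eq_sum_mul_inr_of_mem_ratSpecializations {u v : κ → ℝ} {a : κ → ℚ}
    (huv : ∑ k, (a k : ℝ) * u k = ∑ k, (a k : ℝ) * v k) {q : κ ⊕ κ → ℚ}
    (hq : q ∈ ratSpecializations (Sum.elim u v)) :
    ∑ k, a k * q (.inl k) = ∑ k, a k * q (.inr k) := by
  have h := hq (Sum.elim a (-a)) (by simp [Fintype.sum_sum_type, huv])
  simpa [Fintype.sum_sum_type, ← sub_eq_add_neg, sub_eq_zero] using h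

theorem tendsto_prod_rpow {α : Type*} {l : Filter α} (x : κ → ℝ) {f : α → κ → ℝ} {u : κ → ℝ}
    (hf : Tendsto f l (𝓝 u)) (hzero : ∀ᶠ a in l, ∀ k, u k = 0 → f a k = 0) :
    Tendsto (fun a => ∏ k, x k ^ f a k) l (𝓝 (∏ k, x k ^ u k)) := by
  refine tendsto_finsetProd _ fun k _ => ?_
  by_cases hk : u k = 0
  · refine tendsto_const_nhds.congr' ?_
    filter_upwards [hzero] with a ha
    rw [ha k hk, hk]
  · exact (Real.continuousAt_const_rpow' hk).tendsto.comp (tendsto_pi_nhds.1 hf k)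

theorem Rat.exists_natCast_eq_mul {q : ℚ} (hq : 0 ≤ q) {N : ℕ} (h : q.den ∣ N) :
    ∃ a : ℕ, (a : ℚ) = N * q := by
  obtain ⟨c, rfl⟩ := h
  refine ⟨c * q.num.toNat, ?_⟩
  rw [Nat.cast_mul, ← Int.cast_natCast q.num.toNat, Int.toNat_of_nonneg (Rat.num_nonneg.2 hq),
    ← Rat.den_mul_eq_num]
  push_cast
  ring

theorem pow_prod_rpow_ratCast {x : κ → ℝ} (hx : ∀ k, 0 ≤ x k) {N : ℕ} {q : κ → ℚ} {a : κ → ℕ}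
    (ha : ∀ k, (a k : ℚ) = N * q k) : (∏ k, x k ^ (q k : ℝ)) ^ N = ∏ k, x k ^ a k := by
  rw [← prod_pow]
  refine prod_congr rfl fun k _ => ?_
  rw [← Real.rpow_mul_natCast (hx k), ← Real.rpow_natCast, mul_comm]
  congr 1
  exact_mod_cast congrArg (Rat.cast : ℚ → ℝ) (ha k).symm

theorem prod_rpow_ratCast_eq {ι : Type*} {A : Matrix ι κ ℕ} {x : κ → ℝ} (hx : ∀ k, 0 ≤ x k)
    (hX : ∀ u v : κ → ℕ, (∀ i, ∑ k, A i k * u k = ∑ k, A i k * v k) →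
      ∏ k, x k ^ u k = ∏ k, x k ^ v k)
    {u v : κ → ℚ} (hu : 0 ≤ u) (hv : 0 ≤ v)
    (huv : ∀ i, ∑ k, (A i k : ℚ) * u k = ∑ k, (A i k : ℚ) * v k) :
    ∏ k, x k ^ (u k : ℝ) = ∏ k, x k ^ (v k : ℝ) := by
  set N := (∏ k, (u k).den) * ∏ k, (v k).den
  have hN : N ≠ 0 := by positivity
  choose a ha using fun k => Rat.exists_natCast_eq_mul (hu k)
    (dvd_mul_of_dvd_left (dvd_prod_of_mem (fun k => (u k).den) (mem_univ k)) _)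
  choose b hb using fun k => Rat.exists_natCast_eq_mul (hv k)
    (dvd_mul_of_dvd_right (dvd_prod_of_mem (fun k => (v k).den) (mem_univ k)) _)
  have hscale : ∀ i (c : κ → ℕ) (w : κ → ℚ), (∀ k, (c k : ℚ) = N * w k) →
      ((∑ k, A i k * c k : ℕ) : ℚ) = N * ∑ k, (A i k : ℚ) * w k := fun i c w hc => by
    push_cast
    rw [mul_sum]
    exact sum_congr rfl fun k _ => by rw [hc k]; ring
  have hab : ∀ i, ∑ k, A i k * a k = ∑ k, A i k * b k := fun i => by
    have h : ((∑ k, A i k * a k : ℕ) : ℚ) = ((∑ k, A i k * b k : ℕ) : ℚ) := by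
      rw [hscale i a u ha, hscale i b v hb, huv i]
    exact_mod_cast h
  have hprod_nonneg : ∀ w : κ → ℚ, 0 ≤ ∏ k, x k ^ (w k : ℝ) := fun w =>
    prod_nonneg fun k _ => Real.rpow_nonneg (hx k) _
  rw [← pow_left_inj₀ (hprod_nonneg u) (hprod_nonneg v) hN, pow_prod_rpow_ratCast hx ha,
    pow_prod_rpow_ratCast hx hb, hX a b hab]

end

/-- Lemma A.1: If `x ∈ ℝ_{≥0}^m` satisfies `x^u = x^v` for all nonnegative
integer vectors `u, v` with `A u = A v`, then `x^u = x^v` (real powers) holds for all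
nonnegative real vectors `u, v` with `A u = A v`.  Hence `X_A = Z_A`. -/
theorem toric_variety_real_exponents {d m : ℕ} (A : Matrix (Fin d) (Fin m) ℕ)
    (x : Fin m → ℝ) (hx : ∀ j, 0 ≤ x j)
    (hX : ∀ u v : Fin m → ℕ, (∀ i, ∑ j, A i j * u j = ∑ j, A i j * v j) →
      ∏ j, x j ^ u j = ∏ j, x j ^ v j) :
    ∀ u v : Fin m → ℝ, (∀ j, 0 ≤ u j) → (∀ j, 0 ≤ v j) →
      (∀ i, ∑ j, (A i j : ℝ) * u j = ∑ j, (A i j : ℝ) * v j) →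
      ∏ j, x j ^ u j = ∏ j, x j ^ v j := by
  intro u v hu hv huv
  let y : Fin m ⊕ Fin m → ℝ := Sum.elim u v
  have hy : 0 ≤ y := fun k => by cases k <;> simp [y, hu, hv]
  let F := 𝓝[{z | ∃ q ∈ ratSpecializations y, 0 ≤ q ∧ z = fun k => (q k : ℝ)}] y
  have : F.NeBot := mem_closure_iff_nhdsWithin_neBot.1 (mem_closure_nonneg_ratSpecializations hy)
  have hspec : ∀ᶠ z in F, ∃ q ∈ ratSpecializations y, 0 ≤ q ∧ z = fun k => (q k : ℝ) :=
    self_mem_nhdsWithin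
  have hzero : ∀ᶠ z in F, ∀ k, y k = 0 → z k = 0 := hspec.mono fun _ ⟨q, hq, _, hz⟩ k hk => by
    simp [hz, eq_zero_of_mem_ratSpecializations hq hk]
  have heq : ∀ᶠ z in F, ∏ j, x j ^ z (.inl j) = ∏ j, x j ^ z (.inr j) :=
    hspec.mono fun _ ⟨q, hq, hq0, hz⟩ => by
      subst hz
      exact prod_rpow_ratCast_eq hx hX (fun j => hq0 _) (fun j => hq0 _) fun i =>
        sum_mul_inl_eq_sum_mul_inr_of_mem_ratSpecializations (by exact_mod_cast huv i) hq
  have hlim : ∀ s : Fin m → Fin m ⊕ Fin m, Tendsto (fun z j => z (s j)) F (𝓝 (y ∘ s)) :=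
    fun s => tendsto_nhdsWithin_of_tendsto_nhds
      ((continuous_pi fun j => continuous_apply (s j)).tendsto y)
  exact tendsto_nhds_unique
    ((tendsto_prod_rpow x (hlim .inl) (hzero.mono fun _ hz j => hz (.inl j))).congr' heq)
    (tendsto_prod_rpow x (hlim .inr) (hzero.mono fun _ hz j => hz (.inr j)))
end

section
/- Let A be a d×m matrix of nonnegative integers and F ⊆ {1,...,m}. If there exists a vector x in the nonnegative toric variety X_A whose support is exactly F, then F is facial for A: there exists c ∈ ℝ^d with cᵀa_i = 0 for all i ∈ F and cᵀa_i ≥ 1 for all i ∉ F. -/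
/-!
Let `a_j` be the columns of `A`. Since `x` is supported exactly on `F`, a monomial identity
`x^u = x^v` with `supp v ⊆ F` forces `supp u ⊆ F`: the right side is nonzero. Clearing
denominators, the same holds for nonnegative rational `u, v` with `∑ u_j a_j = ∑ v_j a_j`.
For `j ∉ F`, Farkas' lemma over `ℚ` then yields either such a relation with `u_j > 0`, which is
impossible, or a functional that is nonnegative on all `a_i`, vanishes on `a_i` for `i ∈ F` and
is positive at `a_j`. Rescaling these functionals and summing them over `j ∉ F` gives `c`.
-/

open Finset Function

section Cones

variable {𝕜 V κ : Type*} [Field 𝕜] [LinearOrder 𝕜] [IsStrictOrderedRing 𝕜] [AddCommGroup V]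
  [Module 𝕜 V] [Fintype κ]

lemma PointedCone.apply_nonneg_of_mem_hull {s : Set V} {f : Module.Dual 𝕜 V}
    (hf : ∀ v ∈ s, 0 ≤ f v) {y : V} (hy : y ∈ PointedCone.hull 𝕜 s) : 0 ≤ f y :=
  (Submodule.span_le (p := (PointedCone.positive 𝕜 𝕜).comap f)).mpr hf hy

theorem PointedCone.mem_hull_or_exists_dual_neg {ι : Type*} (v : ι → V) (s : Finset ι)
    (b : V) :
    b ∈ PointedCone.hull 𝕜 (v '' s) ∨
      ∃ f : Module.Dual 𝕜 V, (∀ i ∈ s, 0 ≤ f (v i)) ∧ f b < 0 := by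
  classical
  induction s using Finset.induction_on generalizing v b with
  | empty =>
    by_cases hb : b = 0
    · exact Or.inl (hb ▸ zero_mem _)
    obtain ⟨f, hf⟩ := Module.Projective.exists_dual_eq_one 𝕜 hb
    exact Or.inr ⟨-f, by simp, by simp [hf]⟩
  | insert a s ha ih =>
    have hmono : PointedCone.hull 𝕜 (v '' s) ≤ PointedCone.hull 𝕜 (v '' ↑(insert a s)) :=
      Submodule.span_mono (Set.image_mono (by simp))
    have hva : v a ∈ PointedCone.hull 𝕜 (v '' ↑(insert a s)) :=
      PointedCone.subset_hull ⟨a, by simp, rfl⟩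
    rcases ih v b with hb | ⟨f, hf, hfb⟩
    · exact Or.inl (hmono hb)
    by_cases hfa : 0 ≤ f (v a)
    · exact Or.inr ⟨f, forall_mem_insert .. |>.mpr ⟨hfa, hf⟩, hfb⟩
    rw [not_le] at hfa
    -- Project along `v a` onto `ker f` and separate the projected configuration by induction.
    let π : V →ₗ[𝕜] V := LinearMap.id - (f (v a))⁻¹ • f.smulRight (v a)
    have hπ : ∀ w, π w = w - (f w / f (v a)) • v a := fun w => by
      simp [π, div_eq_inv_mul, mul_smul]
    rcases ih (π ∘ v) (π b) with hπb | ⟨g, hg, hgb⟩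
    · rw [Set.image_comp] at hπb
      obtain ⟨y, hy, hπy⟩ := Submodule.mem_map.mp
        ((Submodule.span_image (π.restrictScalars {c : 𝕜 // 0 ≤ c})).le hπb)
      have hb : b = y + ((f b - f y) / f (v a)) • v a := by
        simp only [LinearMap.coe_restrictScalars, hπ] at hπy
        rw [sub_div, sub_smul]
        linear_combination (norm := module) -hπy
      have hfy : 0 ≤ f y :=
        PointedCone.apply_nonneg_of_mem_hull (Set.forall_mem_image.mpr fun i hi => hf i hi) hy
      exact Or.inl <| hb ▸ add_mem (hmono hy) (PointedCone.smul_mem _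
        (div_nonneg_of_nonpos (by linarith : f b - f y ≤ 0) hfa.le) hva)
    · refine Or.inr ⟨g ∘ₗ π, forall_mem_insert .. |>.mpr ⟨?_, hg⟩, hgb⟩
      simp [hπ, hfa.ne]

lemma PointedCone.exists_nonneg_of_mem_hull_image {ι : Type*} [Fintype ι] {v : ι → V}
    {s : Set ι} {b : V} (hb : b ∈ PointedCone.hull 𝕜 (v '' s)) :
    ∃ c : ι → 𝕜, 0 ≤ c ∧ support c ⊆ s ∧ ∑ i, c i • v i = b := by
  obtain ⟨l, hl, rfl⟩ := (Finsupp.mem_span_image_iff_linearCombination _).mp hb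
  refine ⟨fun i => l i, fun i => (l i).2, fun i hi => ?_, ?_⟩
  · by_contra his
    exact hi (by simp [(Finsupp.mem_supported' _ l).mp hl i his])
  · rw [Finsupp.linearCombination_apply, Finsupp.sum_fintype _ _ (by simp)]
    rfl

theorem exists_dual_pos_of_support_subset {a : κ → V} {F : Set κ}
    (hF : ∀ p q : κ → 𝕜, 0 ≤ p → 0 ≤ q → ∑ j, p j • a j = ∑ j, q j • a j →
      support q ⊆ F → support p ⊆ F)
    {j₀ : κ} (hj₀ : j₀ ∉ F) :
    ∃ f : Module.Dual 𝕜 V, (∀ j, 0 ≤ f (a j)) ∧ (∀ j ∈ F, f (a j) = 0) ∧ 0 < f (a j₀) := by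
  classical
  -- Generators `a j` for all `j` and `-a j` for `j ∈ F`: a separating functional is then
  -- nonnegative on every `a j` and vanishes on `a j` for `j ∈ F`.
  rcases PointedCone.mem_hull_or_exists_dual_neg (𝕜 := 𝕜) (Sum.elim a (-a))
    (univ.disjSum (univ.filter (· ∈ F))) (-a j₀) with hmem | ⟨f, hf, hfj₀⟩
  · obtain ⟨c, hc0, hcF, hc⟩ := PointedCone.exists_nonneg_of_mem_hull_image hmem
    have hrel :
        ∑ j, (c (.inl j) + (Pi.single j₀ 1 : κ → 𝕜) j) • a j = ∑ j, c (.inr j) • a j := by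
      simp only [Fintype.sum_sum_type, Sum.elim_inl, Sum.elim_inr, Pi.neg_apply, smul_neg,
        sum_neg_distrib] at hc
      simp only [add_smul, sum_add_distrib, Pi.single_apply, ite_smul, one_smul, zero_smul,
        sum_ite_eq', mem_univ, if_true]
      linear_combination (norm := module) hc
    refine absurd (hF _ _ (fun j => ?_) (fun j => hc0 _) hrel (fun j hj => ?_) ?_) hj₀
    · exact add_nonneg (hc0 _) (by by_cases h : j = j₀ <;> simp [h])
    · by_contra hjF
      exact (by simp [hjF] : Sum.inr j ∉ univ.disjSum (univ.filter (· ∈ F))) (hcF hj)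
    · simp [add_pos_of_nonneg_of_pos (hc0 (.inl j₀)) one_pos |>.ne']
  · have hfa : ∀ j, 0 ≤ f (a j) := fun j => hf (.inl j) (by simp)
    refine ⟨f, hfa, fun j hj => le_antisymm ?_ (hfa j), by simpa using hfj₀⟩
    simpa using hf (.inr j) (by simp [hj])

theorem exists_dual_eq_zero_and_one_le {a : κ → V} {F : Set κ}
    (h : ∀ j ∉ F, ∃ f : Module.Dual 𝕜 V,
      (∀ i, 0 ≤ f (a i)) ∧ (∀ i ∈ F, f (a i) = 0) ∧ 0 < f (a j)) :
    ∃ f : Module.Dual 𝕜 V, (∀ i ∈ F, f (a i) = 0) ∧ ∀ i ∉ F, 1 ≤ f (a i) := by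
  have hnorm : ∀ j, ∃ f : Module.Dual 𝕜 V,
      (∀ i, 0 ≤ f (a i)) ∧ (∀ i ∈ F, f (a i) = 0) ∧ (j ∉ F → 1 ≤ f (a j)) := by
    intro j
    by_cases hj : j ∈ F
    · exact ⟨0, by simp, by simp, absurd hj⟩
    obtain ⟨f, hf0, hfF, hfj⟩ := h j hj
    refine ⟨(f (a j))⁻¹ • f, fun i => ?_, fun i hi => by simp [hfF i hi], fun _ => by
      simp [hfj.ne']⟩
    simpa using mul_nonneg (inv_nonneg.mpr hfj.le) (hf0 i)
  choose g hg0 hgF hg1 using hnorm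
  refine ⟨∑ j, g j, fun i hi => by simp [hgF _ i hi], fun i hi => ?_⟩
  calc 1 ≤ g i (a i) := hg1 i hi
    _ ≤ ∑ j, g j (a i) := single_le_sum (fun j _ => hg0 j i) (mem_univ i)
    _ = (∑ j, g j) (a i) := by simp

end Cones

lemma Rat.exists_pos_nat_mul_eq_natCast {κ : Type*} [Fintype κ] (q : κ → ℚ) (hq : 0 ≤ q) :
    ∃ N : ℕ, 0 < N ∧ ∃ u : κ → ℕ, ∀ j, (u j : ℚ) = N * q j := by
  have hint : ∀ j, ∃ z : ℤ, (z : ℚ) = (∏ i, (q i).den : ℕ) * q j := fun j => by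
    obtain ⟨k, hk⟩ := dvd_prod_of_mem (fun i => (q i).den) (mem_univ j)
    refine ⟨k * (q j).num, ?_⟩
    push_cast [hk]
    rw [← Rat.den_mul_eq_num]
    ring
  choose z hz using hint
  refine ⟨∏ i, (q i).den, prod_pos fun i _ => (q i).den_pos, fun j => (z j).toNat, fun j => ?_⟩
  have hzj : (0 : ℚ) ≤ z j := hz j ▸ mul_nonneg (Nat.cast_nonneg _) (hq j)
  rw [← hz j]
  exact_mod_cast Int.toNat_of_nonneg (by exact_mod_cast hzj)

theorem support_subset_of_rat_relation {ι κ : Type*} [Fintype κ] (A : Matrix ι κ ℕ) (F : Set κ)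
    (hA : ∀ u v : κ → ℕ, (∀ i, ∑ j, A i j * u j = ∑ j, A i j * v j) →
      support v ⊆ F → support u ⊆ F)
    (p q : κ → ℚ) (hp : 0 ≤ p) (hq : 0 ≤ q)
    (hpq : ∑ j, p j • (fun i => (A i j : ℚ)) = ∑ j, q j • fun i => (A i j : ℚ))
    (hqF : support q ⊆ F) : support p ⊆ F := by
  obtain ⟨N, hN, u, hu⟩ := Rat.exists_pos_nat_mul_eq_natCast (Sum.elim p q)
    (fun j => by cases j; exacts [hp _, hq _])
  have hN' : (N : ℚ) ≠ 0 := by positivity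
  have hrel : ∀ i, ∑ j, A i j * u (.inl j) = ∑ j, A i j * u (.inr j) := fun i => by
    have h := congrFun hpq i
    simp only [Finset.sum_apply, Pi.smul_apply, smul_eq_mul] at h
    have : ∑ j, (A i j : ℚ) * u (.inl j) = ∑ j, (A i j : ℚ) * u (.inr j) := by
      simp only [hu, Sum.elim_inl, Sum.elim_inr, mul_left_comm _ (N : ℚ), ← mul_sum,
        mul_comm (A i _ : ℚ), h]
    exact_mod_cast this
  have hsupp : ∀ j, u j ≠ 0 ↔ Sum.elim p q j ≠ 0 := fun j => by
    rw [← Nat.cast_ne_zero (R := ℚ), hu j]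
    simp [hN']
  exact fun j hj =>
    hA _ _ hrel (fun j hj => hqF ((hsupp (.inr j)).mp hj)) ((hsupp (.inl j)).mpr hj)

theorem support_subset_of_prod_pow_eq {M₀ κ : Type*} [CommMonoidWithZero M₀] [NoZeroDivisors M₀]
    [Nontrivial M₀] [Fintype κ] {x : κ → M₀} {u v : κ → ℕ}
    (h : ∏ j, x j ^ u j = ∏ j, x j ^ v j) (hv : support v ⊆ support x) :
    support u ⊆ support x := by
  intro j hj
  by_contra hxj
  have hu : ∏ j, x j ^ u j = 0 :=
    prod_eq_zero (mem_univ j) (by rw [notMem_support.mp hxj, zero_pow hj])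
  refine prod_ne_zero_iff.mpr (fun i _ => ?_) (h ▸ hu)
  by_cases hvi : v i = 0
  · simp [hvi]
  · exact pow_ne_zero _ (hv hvi)

theorem support_in_toric_implies_facial_general {d m : ℕ} (A : Matrix (Fin d) (Fin m) ℕ)
    (F : Set (Fin m)) (x : Fin m → ℝ)
    (hsupp : ∀ j, x j ≠ 0 ↔ j ∈ F)
    (hX : ∀ u v : Fin m → ℕ, (∀ i, ∑ j, A i j * u j = ∑ j, A i j * v j) →
      ∏ j, x j ^ u j = ∏ j, x j ^ v j) :
    ∃ c : Fin d → ℝ, (∀ i ∈ F, ∑ k, c k * (A k i : ℝ) = 0) ∧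
      (∀ i ∉ F, 1 ≤ ∑ k, c k * (A k i : ℝ)) := by
  have hxF : support x = F := Set.ext hsupp
  have hA : ∀ u v : Fin m → ℕ, (∀ i, ∑ j, A i j * u j = ∑ j, A i j * v j) →
      support v ⊆ F → support u ⊆ F := fun u v huv hv =>
    hxF ▸ support_subset_of_prod_pow_eq (hX u v huv) (hxF ▸ hv)
  obtain ⟨f, hfF, hfG⟩ := exists_dual_eq_zero_and_one_le fun j hj =>
    exists_dual_pos_of_support_subset (support_subset_of_rat_relation A F hA) hj
  set c := (dotProductEquiv ℚ (Fin d)).symm f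
  have hc : ∀ j, ∑ k, (c k : ℝ) * (A k j : ℝ) = ((f fun k => (A k j : ℚ)) : ℝ) := fun j => by
    rw [← (dotProductEquiv ℚ (Fin d)).apply_symm_apply f, dotProductEquiv_apply_apply]
    push_cast [dotProduct]
    rfl
  refine ⟨fun k => c k, fun j hj => ?_, fun j hj => ?_⟩
  · rw [hc, hfF j hj, Rat.cast_zero]
  · rw [hc]
    exact_mod_cast hfG j hj

/-- Lemma A.2, (c) ⇒ (a): If some vector in the nonnegative toric variety
`X_A` has support exactly `F`, then `F` is facial for `A`. -/
theorem support_in_toric_implies_facial {d m : ℕ} (A : Matrix (Fin d) (Fin m) ℕ)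
    (F : Set (Fin m)) (x : Fin m → ℝ) (hx : ∀ j, 0 ≤ x j)
    (hsupp : ∀ j, x j ≠ 0 ↔ j ∈ F)
    (hX : ∀ u v : Fin m → ℕ, (∀ i, ∑ j, A i j * u j = ∑ j, A i j * v j) →
      ∏ j, x j ^ u j = ∏ j, x j ^ v j) :
    ∃ c : Fin d → ℝ, (∀ i ∈ F, ∑ k, c k * (A k i : ℝ) = 0) ∧
      (∀ i ∉ F, 1 ≤ ∑ k, c k * (A k i : ℝ)) :=
  support_in_toric_implies_facial_general A F x hsupp hX
end

section
/- The distribution P on {0,1}^4 with p_{0000} = p_{0001} = p_{1000} = p_{0011} = p_{1100} = p_{0111} = p_{1110} = p_{1111} = 1/8 satisfies every binomial x^u = x^v with u − v in the integer kernel of the four-cycle matrix A(G'), i.e., P lies in the nonnegative toric variety X_{A(G')}, yet P cannot be written as p_{ijkl} = ψ_{12}(i,j)ψ_{23}(j,k)ψ_{34}(k,l)ψ_{14}(i,l) for nonnegative functions ψ on {0,1}^2. -/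
private lemma moussouris_key (s n s' n' : ℕ) (h1 : n = n') (h2 : s + n = s' + n') :
    (1/8 : ℝ) ^ s * 0 ^ n = (1/8 : ℝ) ^ s' * 0 ^ n' := by
  subst h1
  rcases Nat.eq_zero_or_pos n with h | h
  · subst h
    have hs : s = s' := by omega
    rw [hs]
  · rw [zero_pow (by omega), mul_zero, mul_zero]

/-- Example 7: The Moussouris distribution lies in the nonnegative toric
variety `X_{A(G')}` of the four-cycle model (it satisfies every binomial `x^u = x^v` with
`A(G')u = A(G')v`), yet it does not factor as a product of nonnegative edge potentials
`ψ₁₂(i,j)ψ₂₃(j,k)ψ₃₄(k,l)ψ₁₄(i,l)`. -/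
theorem moussouris_in_toric_but_not_factoring (P : Fin 2 → Fin 2 → Fin 2 → Fin 2 → ℝ)
    (hP : ∀ a b c d : Fin 2, P a b c d =
      if (a, b, c, d) = ((0 : Fin 2), (0 : Fin 2), (0 : Fin 2), (0 : Fin 2)) ∨
         (a, b, c, d) = (0, 0, 0, 1) ∨ (a, b, c, d) = (1, 0, 0, 0) ∨
         (a, b, c, d) = (0, 0, 1, 1) ∨ (a, b, c, d) = (1, 1, 0, 0) ∨
         (a, b, c, d) = (0, 1, 1, 1) ∨ (a, b, c, d) = (1, 1, 1, 0) ∨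
         (a, b, c, d) = (1, 1, 1, 1) then (1 / 8 : ℝ) else 0) :
    (∀ u v : Fin 2 → Fin 2 → Fin 2 → Fin 2 → ℕ,
        ((∀ x y : Fin 2, ∑ c, ∑ d, u x y c d = ∑ c, ∑ d, v x y c d) ∧
         (∀ x y : Fin 2, ∑ a, ∑ d, u a x y d = ∑ a, ∑ d, v a x y d) ∧
         (∀ x y : Fin 2, ∑ a, ∑ b, u a b x y = ∑ a, ∑ b, v a b x y) ∧
         (∀ x y : Fin 2, ∑ b, ∑ c, u x b c y = ∑ b, ∑ c, v x b c y)) →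
        ∏ a, ∏ b, ∏ c, ∏ d, P a b c d ^ u a b c d =
          ∏ a, ∏ b, ∏ c, ∏ d, P a b c d ^ v a b c d) ∧
    ¬ (∃ ψ12 ψ23 ψ34 ψ14 : Fin 2 → Fin 2 → ℝ,
        (∀ x y, 0 ≤ ψ12 x y) ∧ (∀ x y, 0 ≤ ψ23 x y) ∧
        (∀ x y, 0 ≤ ψ34 x y) ∧ (∀ x y, 0 ≤ ψ14 x y) ∧
        ∀ a b c d : Fin 2, P a b c d = ψ12 a b * ψ23 b c * ψ34 c d * ψ14 a d) := by
  have p0000 : P 0 0 0 0 = 1/8 := by rw [hP]; rw [if_pos (by decide)]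
  have p0001 : P 0 0 0 1 = 1/8 := by rw [hP]; rw [if_pos (by decide)]
  have p0010 : P 0 0 1 0 = 0 := by rw [hP]; rw [if_neg (by decide)]
  have p0011 : P 0 0 1 1 = 1/8 := by rw [hP]; rw [if_pos (by decide)]
  have p0100 : P 0 1 0 0 = 0 := by rw [hP]; rw [if_neg (by decide)]
  have p0101 : P 0 1 0 1 = 0 := by rw [hP]; rw [if_neg (by decide)]
  have p0110 : P 0 1 1 0 = 0 := by rw [hP]; rw [if_neg (by decide)]
  have p0111 : P 0 1 1 1 = 1/8 := by rw [hP]; rw [if_pos (by decide)]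
  have p1000 : P 1 0 0 0 = 1/8 := by rw [hP]; rw [if_pos (by decide)]
  have p1001 : P 1 0 0 1 = 0 := by rw [hP]; rw [if_neg (by decide)]
  have p1010 : P 1 0 1 0 = 0 := by rw [hP]; rw [if_neg (by decide)]
  have p1011 : P 1 0 1 1 = 0 := by rw [hP]; rw [if_neg (by decide)]
  have p1100 : P 1 1 0 0 = 1/8 := by rw [hP]; rw [if_pos (by decide)]
  have p1101 : P 1 1 0 1 = 0 := by rw [hP]; rw [if_neg (by decide)]
  have p1110 : P 1 1 1 0 = 1/8 := by rw [hP]; rw [if_pos (by decide)]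
  have p1111 : P 1 1 1 1 = 1/8 := by rw [hP]; rw [if_pos (by decide)]
  constructor
  · intro u v ⟨h1, h2, h3, h4⟩
    have a1 := h1 0 0; have a2 := h1 0 1; have a3 := h1 1 0; have a4 := h1 1 1
    have b1 := h2 0 0; have b2 := h2 0 1; have b3 := h2 1 0; have b4 := h2 1 1
    have c1 := h3 0 0; have c2 := h3 0 1; have c3 := h3 1 0; have c4 := h3 1 1
    have d1 := h4 0 0; have d2 := h4 0 1; have d3 := h4 1 0; have d4 := h4 1 1
    simp only [Fin.sum_univ_two] at a1 a2 a3 a4 b1 b2 b3 b4 c1 c2 c3 c4 d1 d2 d3 d4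
    have pform : ∀ w : Fin 2 → Fin 2 → Fin 2 → Fin 2 → ℕ,
        (∏ a, ∏ b, ∏ c, ∏ d, P a b c d ^ w a b c d) =
        (1/8 : ℝ) ^ (w 0 0 0 0 + w 0 0 0 1 + w 0 0 1 1 + w 0 1 1 1 + w 1 0 0 0 +
          w 1 1 0 0 + w 1 1 1 0 + w 1 1 1 1) *
        0 ^ (w 0 0 1 0 + w 0 1 0 0 + w 0 1 0 1 + w 0 1 1 0 + w 1 0 0 1 + w 1 0 1 0 +
          w 1 0 1 1 + w 1 1 0 1) := by
      intro w
      simp only [Fin.prod_univ_two]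
      rw [p0000, p0001, p0010, p0011, p0100, p0101, p0110, p0111,
          p1000, p1001, p1010, p1011, p1100, p1101, p1110, p1111]
      ring
    rw [pform u, pform v]
    exact moussouris_key _ _ _ _ (by omega) (by omega)
  · rintro ⟨ψ12, ψ23, ψ34, ψ14, n12, n23, n34, n14, heq⟩
    have e0000 := heq 0 0 0 0
    have e0100 := heq 0 1 0 0
    have e0111 := heq 0 1 1 1
    have e1100 := heq 1 1 0 0
    rw [p0000] at e0000
    rw [p0100] at e0100
    rw [p0111] at e0111
    rw [p1100] at e1100
    have h12 : 0 < ψ12 0 1 := by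
      rcases lt_or_eq_of_le (n12 0 1) with h | h
      · exact h
      · exfalso; rw [← h] at e0111; norm_num at e0111
    have h23 : 0 < ψ23 1 0 := by
      rcases lt_or_eq_of_le (n23 1 0) with h | h
      · exact h
      · exfalso; rw [← h] at e1100; norm_num at e1100
    have h34 : 0 < ψ34 0 0 := by
      rcases lt_or_eq_of_le (n34 0 0) with h | h
      · exact h
      · exfalso; rw [← h] at e0000; norm_num at e0000
    have h14 : 0 < ψ14 0 0 := by
      rcases lt_or_eq_of_le (n14 0 0) with h | h
      · exact h
      · exfalso; rw [← h] at e0000; norm_num at e0000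
    have : 0 < ψ12 0 1 * ψ23 1 0 * ψ34 0 0 * ψ14 0 0 := by positivity
    rw [← e0100] at this
    exact lt_irrefl 0 this
end

section
/- Let G be the graph on 2n vertices X_1,...,X_{2n} whose only non-edges are {X_i, X_{i+n}} for i = 1,...,n, with all variables binary. Let u be the 0/1 exponent vector supported on states (i_1,...,i_{2n}) ∈ {0,1}^{2n} with i_1 = i_3 = ... = i_{2n−1} and i_1 ≡ i_2 + i_4 + ... + i_{2n} (mod 2), and v the analogous vector with i_1 ≢ i_2 + i_4 + ... + i_{2n} (mod 2). Then u and v each have exactly 2^n nonzero entries, and A(G)u = A(G)v; i.e., p^u − p^v is a binomial of degree 2^n in the toric ideal I_{A(G)}. -/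
/-!
Write a state as a bit `x` on the even positions (`X₁, X₃, …` in the paper) and a vector
`y ∈ 𝔽₂ⁿ` on the odd ones. The supports of `u` and `v` are the states with `x + Σ y = 0`,
resp. `= 1`, so `y` is free and each support has `2ⁿ` elements. Given a clique `C`, translation
by a vector `w` that vanishes on `C`, is constant on the even positions and has
`x(w) + Σ y(w) = 1` preserves agreement with any assignment on `C` and swaps the two supports.
If some odd position `j` lies outside `C`, the unit vector at `j` is such a `w`. Otherwise `C`
contains every odd position; then `n` is odd (else `X₂, X_{n+2} ∈ C`) and `C` contains no even
position (its partner `k ± n` would be odd), so the indicator of the even positions works.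
-/

open Finset

theorem Fin.val_sum {ι : Type*} {q : ℕ} (t : Finset ι) (g : ι → Fin (q + 1)) :
    (∑ i ∈ t, g i).val = (∑ i ∈ t, (g i).val) % (q + 1) := by
  induction t using Finset.cons_induction with
  | empty => simp
  | cons a t ha ih => rw [Finset.sum_cons, Finset.sum_cons, Fin.val_add, ih, Nat.add_mod_mod]

namespace MatchingComplement

variable {m : ℕ}

def oddSum (s : Fin m → Fin 2) : Fin 2 := ∑ k, if k.val % 2 = 1 then s k else 0

lemma oddSum_add (s w : Fin m → Fin 2) : oddSum (s + w) = oddSum s + oddSum w := by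
  simp only [oddSum, Pi.add_apply, ← sum_add_distrib, ite_add_ite, add_zero]

lemma val_oddSum (s : Fin m → Fin 2) :
    (oddSum s).val = (∑ k, if k.val % 2 = 1 then (s k).val else 0) % 2 := by
  rw [oddSum, Fin.val_sum]
  simp only [apply_ite Fin.val, Fin.val_zero]

lemma oddSum_single {j : Fin m} (hj : j.val % 2 = 1) : oddSum (Pi.single j 1) = 1 := by
  rw [oddSum, sum_eq_single j (fun k _ hkj => by simp [hkj]) (by simp), if_pos hj,
    Pi.single_eq_same]

lemma oddSum_evenIndicator : oddSum (fun k : Fin m => if k.val % 2 = 0 then 1 else 0) = 0 :=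
  sum_eq_zero fun k _ => by by_cases hk : k.val % 2 = 0 <;> simp [hk]

lemma oddSum_eq_sum_fin {n : ℕ} (s : Fin (2 * n) → Fin 2) :
    oddSum s = ∑ i : Fin n, s ⟨2 * i.val + 1, by omega⟩ := by
  rw [oddSum, ← sum_filter]
  refine sum_nbij' (fun k => ⟨k.val / 2, by omega⟩) (fun i => ⟨2 * i.val + 1, by omega⟩)
    (fun _ _ => mem_coe.2 (mem_univ _)) (fun i _ => by simp) (fun k hk => ?_)
    (fun i _ => Fin.ext (by dsimp only; omega)) (fun k hk => congrArg s ?_) <;>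
  · have hk : k.val % 2 = 1 := by simpa using hk
    exact Fin.ext (by dsimp only; omega)

/-- `z` plays the role of `X₁`; `paritySupport z 0` and `paritySupport z 1` are the supports
of `u` and `v`. -/
def paritySupport (z : Fin m) (c : Fin 2) : Finset (Fin m → Fin 2) :=
  {s | (∀ k : Fin m, k.val % 2 = 0 → s k = s z) ∧ s z + oddSum s = c}

lemma mem_paritySupport_zero_iff {z : Fin m} {s : Fin m → Fin 2} :
    s ∈ paritySupport z 0 ↔ (∀ k : Fin m, k.val % 2 = 0 → s k = s z) ∧
      (s z).val % 2 = (∑ k, if k.val % 2 = 1 then (s k).val else 0) % 2 := by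
  have key : ∀ x y : Fin 2, x.val % 2 = y.val ↔ x + y = 0 := by decide
  simp only [paritySupport, mem_filter, mem_univ, true_and, ← val_oddSum, key]

lemma mem_paritySupport_one_iff {z : Fin m} {s : Fin m → Fin 2} :
    s ∈ paritySupport z 1 ↔ (∀ k : Fin m, k.val % 2 = 0 → s k = s z) ∧
      (s z).val % 2 ≠ (∑ k, if k.val % 2 = 1 then (s k).val else 0) % 2 := by
  have key : ∀ x y : Fin 2, x.val % 2 ≠ y.val ↔ x + y = 1 := by decide
  simp only [paritySupport, mem_filter, mem_univ, true_and, ← val_oddSum, key]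

lemma add_mem_paritySupport_iff {z : Fin m} {w : Fin m → Fin 2}
    (hw : ∀ k : Fin m, k.val % 2 = 0 → w k = w z) {s : Fin m → Fin 2} {c : Fin 2} :
    s + w ∈ paritySupport z c ↔ s ∈ paritySupport z (c - (w z + oddSum w)) := by
  simp only [paritySupport, mem_filter, mem_univ, true_and, Pi.add_apply, oddSum_add,
    eq_sub_iff_add_eq, add_add_add_comm]
  exact and_congr_left' (forall₂_congr fun k hk => by rw [hw k hk, add_left_inj])

lemma card_paritySupport {n : ℕ} {z : Fin (2 * n)} (hz : z.val % 2 = 0) (c : Fin 2) :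
    #(paritySupport z c) = 2 ^ n := by
  have hodd (i : Fin n) : (2 * i.val + 1) % 2 = 1 := by omega
  have hdiv (i : Fin n) : (⟨(2 * i.val + 1) / 2, by omega⟩ : Fin n) = i :=
    Fin.ext (by dsimp only; omega)
  rw [show 2 ^ n = #(univ : Finset (Fin n → Fin 2)) by simp]
  refine card_nbij' (fun s i => s ⟨2 * i.val + 1, by omega⟩)
    (fun t k => if k.val % 2 = 1 then t ⟨k.val / 2, by omega⟩ else c - ∑ i, t i)
    (fun _ _ => mem_coe.2 (mem_univ _)) (fun t _ => ?_) (fun s hs => ?_) (fun t _ => ?_)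
  · simp only [paritySupport, coe_filter, mem_univ, true_and, Set.mem_ofPred_eq,
      oddSum_eq_sum_fin]
    refine ⟨fun k hk => ?_, ?_⟩
    · simp only [hk, hz, zero_ne_one, if_false]
    · simp only [hz, zero_ne_one, if_false, hodd, if_true, hdiv, sub_add_cancel]
  · simp only [paritySupport, coe_filter, mem_univ, true_and, Set.mem_ofPred_eq,
      oddSum_eq_sum_fin] at hs
    obtain ⟨heven, hpar⟩ := hs
    funext k
    dsimp only
    split_ifs with hk
    · exact congrArg s (Fin.ext (by dsimp only; omega))
    · rw [← hpar, add_sub_cancel_right, heven k (by omega)]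
  · funext i
    simp [hdiv]

lemma sum_agree_paritySupport_zero_eq_one {z : Fin m} {w : Fin m → Fin 2}
    (hw_even : ∀ k : Fin m, k.val % 2 = 0 → w k = w z) (hw : w z + oddSum w = 1)
    {C : Finset (Fin m)} (hwC : ∀ k ∈ C, w k = 0) (f : Fin m → Fin 2) :
    (∑ s, if ∀ k ∈ C, s k = f k then (if s ∈ paritySupport z 0 then 1 else 0) else 0) =
      ∑ s, if ∀ k ∈ C, s k = f k then (if s ∈ paritySupport z 1 then 1 else 0) else 0 := by
  refine Fintype.sum_equiv (Equiv.addRight w) _ _ fun s => ?_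
  have hagree : (∀ k ∈ C, (s + w) k = f k) ↔ ∀ k ∈ C, s k = f k :=
    forall₂_congr fun k hk => by rw [Pi.add_apply, hwC k hk, add_zero]
  simp only [Equiv.coe_addRight, hagree, add_mem_paritySupport_iff hw_even, hw, sub_self]

section Clique

variable {n : ℕ} {C : Finset (Fin (2 * n))}

lemma exists_odd_notMem_or_forall_mem_odd
    (hC : ∀ i ∈ C, ∀ j ∈ C, i ≠ j → ¬(j.val = i.val + n ∨ i.val = j.val + n)) :
    (∃ j : Fin (2 * n), j.val % 2 = 1 ∧ j ∉ C) ∨ ∀ k ∈ C, k.val % 2 = 1 := by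
  by_contra! h
  obtain ⟨hodd, k, hk, hk_even⟩ := h
  have hkn := k.isLt
  rcases Nat.even_or_odd n with ⟨r, hr⟩ | ⟨r, hr⟩
  · exact hC ⟨1, by omega⟩ (hodd _ rfl) ⟨n + 1, by omega⟩ (hodd _ (by dsimp only; omega))
      (Fin.ne_of_val_ne (by dsimp only; omega)) (Or.inl (by dsimp only; omega))
  · by_cases hlt : k.val < n
    · exact hC k hk ⟨k.val + n, by omega⟩ (hodd _ (by dsimp only; omega))
        (Fin.ne_of_val_ne (by dsimp only; omega)) (Or.inl rfl)
    · exact hC k hk ⟨k.val - n, by omega⟩ (hodd _ (by dsimp only; omega))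
        (Fin.ne_of_val_ne (by dsimp only; omega)) (Or.inr (by dsimp only; omega))

lemma exists_flip_of_clique {z : Fin (2 * n)} (hz : z.val % 2 = 0)
    (hC : ∀ i ∈ C, ∀ j ∈ C, i ≠ j → ¬(j.val = i.val + n ∨ i.val = j.val + n)) :
    ∃ w : Fin (2 * n) → Fin 2, (∀ k : Fin (2 * n), k.val % 2 = 0 → w k = w z) ∧
      w z + oddSum w = 1 ∧ ∀ k ∈ C, w k = 0 := by
  rcases exists_odd_notMem_or_forall_mem_odd hC with ⟨j, hj, hjC⟩ | hC_odd
  · have hne : ∀ k : Fin (2 * n), k.val % 2 = 0 → k ≠ j := fun k hk h => by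
      rw [h] at hk; omega
    refine ⟨Pi.single j 1, fun k hk => ?_, ?_, fun k hk => ?_⟩
    · rw [Pi.single_eq_of_ne (hne k hk), Pi.single_eq_of_ne (hne z hz)]
    · rw [oddSum_single hj, Pi.single_eq_of_ne (hne z hz), zero_add]
    · exact Pi.single_eq_of_ne (by rintro rfl; exact hjC hk) _
  · refine ⟨fun k => if k.val % 2 = 0 then 1 else 0, fun k hk => ?_, ?_, fun k hk => ?_⟩
    · simp only [if_pos hk, if_pos hz]
    · simp only [oddSum_evenIndicator, if_pos hz, add_zero]
    · simp only [hC_odd k hk, one_ne_zero, if_false]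

end Clique

end MatchingComplement

/-- Proposition 2: For the graph `G` on `2n` binary variables whose only
non-edges are `{Xᵢ, Xᵢ₊ₙ}` (`i = 1,…,n`; in 0-based indexing the non-edges are
`{i, i+n}` for `i < n`, and the 1-based odd-indexed variables `X₁,X₃,…,X_{2n−1}` are the
0-based even positions), the 0/1 exponent vectors `u` (states with all even positions
equal and matching parity) and `v` (mismatching parity) each have exactly `2ⁿ` nonzero
entries and satisfy `A(G)u = A(G)v`: for every clique `C` of `G` and every assignment on
`C`, the number of supported states of `u` extending it equals that of `v`.  Thus
`p^u − p^v` is a degree-`2ⁿ` binomial in the toric ideal `I_{A(G)}`. -/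
theorem matching_complement_binomial_of_degree_two_pow (n : ℕ) (hn : 0 < n)
    (u v : (Fin (2 * n) → Fin 2) → ℕ)
    (hu : ∀ s, u s =
      if (∀ k : Fin (2 * n), k.val % 2 = 0 → s k = s ⟨0, by omega⟩) ∧
         (s ⟨0, by omega⟩).val % 2 =
           (∑ k : Fin (2 * n), if k.val % 2 = 1 then (s k).val else 0) % 2
      then 1 else 0)
    (hv : ∀ s, v s =
      if (∀ k : Fin (2 * n), k.val % 2 = 0 → s k = s ⟨0, by omega⟩) ∧
         (s ⟨0, by omega⟩).val % 2 ≠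
           (∑ k : Fin (2 * n), if k.val % 2 = 1 then (s k).val else 0) % 2
      then 1 else 0) :
    (∑ s, u s = 2 ^ n) ∧ (∑ s, v s = 2 ^ n) ∧
    (∀ C : Finset (Fin (2 * n)),
      (∀ i ∈ C, ∀ j ∈ C, i ≠ j → ¬(j.val = i.val + n ∨ i.val = j.val + n)) →
      ∀ f : Fin (2 * n) → Fin 2,
        (∑ s, if ∀ k ∈ C, s k = f k then u s else 0) =
        (∑ s, if ∀ k ∈ C, s k = f k then v s else 0)) := by
  set z : Fin (2 * n) := ⟨0, by omega⟩
  have hz : z.val % 2 = 0 := rfl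
  have hu' : u = fun s => if s ∈ MatchingComplement.paritySupport z 0 then 1 else 0 :=
    funext fun s =>
      (hu s).trans (if_congr MatchingComplement.mem_paritySupport_zero_iff.symm rfl rfl)
  have hv' : v = fun s => if s ∈ MatchingComplement.paritySupport z 1 then 1 else 0 :=
    funext fun s =>
      (hv s).trans (if_congr MatchingComplement.mem_paritySupport_one_iff.symm rfl rfl)
  subst hu' hv'
  refine ⟨by simp [MatchingComplement.card_paritySupport hz],
    by simp [MatchingComplement.card_paritySupport hz], fun C hC f => ?_⟩
  obtain ⟨w, hw_even, hw, hwC⟩ := MatchingComplement.exists_flip_of_clique hz hC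
  exact MatchingComplement.sum_agree_paritySupport_zero_eq_one hw_even hw hwC f
end

section
/- Let A be a d×m nonnegative integer matrix, P ∈ X_A with support F, c ∈ ℝ^d a facial certificate for F (cᵀa_i = 0 for i ∈ F, cᵀa_i ≥ 1 for i ∉ F), and t ∈ ℝ_{>0}^d with ∏_i t_i^{a_{ij}} = p_j for all j ∈ F. Define P(ε)_j = ε^{cᵀa_j} ∏_i t_i^{a_{ij}} for ε > 0. Then P(ε) = φ_A(ε^{c_1}t_1, ..., ε^{c_d}t_d) ∈ image(φ_A) for every ε > 0, and P(ε) → P as ε → 0^+. -/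
open Real

/-- With `P ∈ X_A` supported on `F`, `c` a facial certificate for `F`, and
`t > 0` solving `∏ᵢ tᵢ^{a_{ij}} = pⱼ` on `F`, the curve
`P(ε)ⱼ = ε^{cᵀaⱼ} ∏ᵢ tᵢ^{a_{ij}}` satisfies `P(ε) = φ_A(ε^{c₁}t₁, …, ε^{c_d}t_d)` (so
`P(ε)` is in the image of `φ_A` for all `ε > 0`) and `P(ε) → P` as `ε → 0⁺`. -/
theorem toric_point_is_limit_of_factoring {d m : ℕ} (A : Matrix (Fin d) (Fin m) ℕ)
    (P : Fin m → ℝ) (hP : ∀ j, 0 ≤ P j) (F : Set (Fin m)) (hF : ∀ j, j ∈ F ↔ P j ≠ 0)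
    (hX : ∀ u v : Fin m → ℕ, (∀ i, ∑ j, A i j * u j = ∑ j, A i j * v j) →
      ∏ j, P j ^ u j = ∏ j, P j ^ v j)
    (c : Fin d → ℝ)
    (hc0 : ∀ j ∈ F, ∑ i, c i * (A i j : ℝ) = 0)
    (hc1 : ∀ j ∉ F, 1 ≤ ∑ i, c i * (A i j : ℝ))
    (t : Fin d → ℝ) (ht : ∀ i, 0 < t i)
    (htP : ∀ j ∈ F, ∏ i, t i ^ A i j = P j) :
    (∀ ε : ℝ, 0 < ε →
      (fun j => ε ^ (∑ i, c i * (A i j : ℝ)) * ∏ i, t i ^ A i j) =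
        fun j => ∏ i, (ε ^ c i * t i) ^ A i j) ∧
    Filter.Tendsto
      (fun ε : ℝ => fun j => ε ^ (∑ i, c i * (A i j : ℝ)) * ∏ i, t i ^ A i j)
      (nhdsWithin 0 (Set.Ioi 0)) (nhds P) := by
  constructor
  · intro ε hε
    funext j
    rw [Real.rpow_sum_of_pos hε, ← Finset.prod_mul_distrib]
    congr 1
    funext i
    rw [mul_pow]
    congr 1
    rw [← Real.rpow_natCast (ε ^ c i) (A i j), ← Real.rpow_mul hε.le]
  · rw [tendsto_pi_nhds]
    intro j
    by_cases hj : j ∈ F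
    · have he : (∑ i, c i * (A i j : ℝ)) = 0 := hc0 j hj
      have : (fun ε : ℝ => ε ^ (∑ i, c i * (A i j : ℝ)) * ∏ i, t i ^ A i j) =ᶠ[nhdsWithin 0 (Set.Ioi 0)] fun _ => P j := by
        filter_upwards [self_mem_nhdsWithin] with ε (hε : ε ∈ Set.Ioi 0)
        rw [he, Real.rpow_zero, one_mul, htP j hj]
      exact Filter.Tendsto.congr' this.symm tendsto_const_nhds
    · have he : (1 : ℝ) ≤ ∑ i, c i * (A i j : ℝ) := hc1 j hj
      have hPj : P j = 0 := by by_contra h; exact hj ((hF j).mpr h)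
      rw [hPj]
      have h0 : Filter.Tendsto (fun ε : ℝ => ε ^ (∑ i, c i * (A i j : ℝ)))
          (nhdsWithin 0 (Set.Ioi 0)) (nhds 0) := by
        have := (Real.continuousAt_rpow_const 0 (∑ i, c i * (A i j : ℝ))
          (Or.inr (by linarith))).tendsto
        rw [Real.zero_rpow (by linarith)] at this
        exact this.mono_left nhdsWithin_le_nhds
      simpa using h0.mul_const (∏ i, t i ^ A i j)
end
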